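/- arXiv:math/0108013 — 3 statements merged into one kernel-verified Lean document; each statement's English description precedes it below -/
import Mathlib

section
/- Let P be a full-dimensional lattice polytope whose lattice points affinely generate ℤ^n, and let V ⊆ Col(P) be a rigid system. Then for arbitrary elements v_1, …, v_n ∈ [V] with n ≥ 1 (repetitions allowed), one has v_1 + ⋯ + v_n ≠ 0. -/
open Set

noncomputable section

/-- The real point corresponding to a lattice point of `ℤⁿ`. -/
def toR {n : ℕ} (z : Fin n → ℤ) : Fin n → ℝ := fun i => (z i : ℝ)

/-- A lattice polytope, described as the convex hull of a nonempty finite set of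
lattice points. -/
structure LatticePolytope (n : ℕ) where
  verts : Finset (Fin n → ℤ)
  nonem : verts.Nonempty

namespace LatticePolytope

variable {n : ℕ}

/-- The underlying set of the polytope. -/
def carrier (P : LatticePolytope n) : Set (Fin n → ℝ) :=
  convexHull ℝ (↑(P.verts.image toR))

/-- `P` is full-dimensional. -/
def IsFullDim (P : LatticePolytope n) : Prop :=
  (interior P.carrier).Nonempty

/-- The set `L_P` of lattice points of `P`. -/
def latticePoints (P : LatticePolytope n) : Set (Fin n → ℤ) :=
  {z | toR z ∈ P.carrier}

/-- The lattice points of `P` affinely generate `ℤⁿ`. -/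
def AffGen (P : LatticePolytope n) : Prop :=
  ∀ x₀ ∈ P.latticePoints,
    AddSubgroup.closure {y | ∃ x ∈ P.latticePoints, y = x - x₀} =
      (⊤ : AddSubgroup (Fin n → ℤ))

/-- The `ℝ`-linear extension of an additive form on `ℤⁿ`. -/
def formR (φ : (Fin n → ℤ) →+ ℤ) : (Fin n → ℝ) → ℝ :=
  fun x => ∑ i, x i * (φ (Pi.single i 1) : ℝ)

/-- A facet of `P`, encoded together with its support form `⟨F,-⟩` (a surjective
additive form whose minimum `b_F` over `P` is attained exactly on the facet, the
facet being `(n-1)`-dimensional). -/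
structure Facet (P : LatticePolytope n) where
  form : (Fin n → ℤ) →+ ℤ
  surj : Function.Surjective form
  b : ℤ
  min_le : ∀ x ∈ P.carrier, (b : ℝ) ≤ formR form x
  attained : ∃ x ∈ P.carrier, formR form x = (b : ℝ)
  dim : Module.finrank ℝ (vectorSpan ℝ {x ∈ P.carrier | formR form x = (b : ℝ)}) + 1 = n

/-- The underlying set of a facet. -/
def Facet.set {P : LatticePolytope n} (F : P.Facet) : Set (Fin n → ℝ) :=
  {x ∈ P.carrier | formR F.form x = (F.b : ℝ)}

/-- `F` is a base facet for `v`, i.e. `v` is a column vector with base facet `F`. -/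
def IsBaseFacet (P : LatticePolytope n) (v : Fin n → ℤ) (F : P.Facet) : Prop :=
  v ≠ 0 ∧ ∀ x : Fin n → ℤ, toR x ∈ P.carrier → toR x ∉ F.set →
    toR (x + v) ∈ P.carrier

/-- `v` is a column vector of `P`. -/
def IsColVec (P : LatticePolytope n) (v : Fin n → ℤ) : Prop :=
  ∃ F : P.Facet, P.IsBaseFacet v F

/-- `Col(P)`, the set of column vectors of `P`. -/
def Col (P : LatticePolytope n) : Set (Fin n → ℤ) := {v | P.IsColVec v}

/-- The product `uv` of the column vectors `u` and `v` exists. -/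
def ProdEx (P : LatticePolytope n) (u v : Fin n → ℤ) : Prop :=
  P.IsColVec u ∧ P.IsColVec v ∧ u + v ≠ 0 ∧
    ∀ Fu Fv : P.Facet, P.IsBaseFacet u Fu → P.IsBaseFacet v Fv →
      ∀ x : Fin n → ℤ, toR x ∈ P.carrier → toR x ∉ Fu.set → toR (x + u) ∉ Fv.set

/-- `P` is balanced: `⟨P_u, v⟩ ≤ 1` for all column vectors `u, v`. -/
def Balanced (P : LatticePolytope n) : Prop :=
  ∀ u v : Fin n → ℤ, ∀ F : P.Facet, P.IsBaseFacet u F → P.IsColVec v → F.form v ≤ 1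

/-- Weak existence of the product of a (nonempty) list of column vectors:
some bracketing makes all the recursively formed pairwise products exist. -/
inductive WeakProd (P : LatticePolytope n) : List (Fin n → ℤ) → Prop
  | single (v : Fin n → ℤ) (h : P.IsColVec v) : WeakProd P [v]
  | mul (L₁ L₂ : List (Fin n → ℤ)) (h₁ : WeakProd P L₁) (h₂ : WeakProd P L₂)
      (h : P.ProdEx L₁.sum L₂.sum) : WeakProd P (L₁ ++ L₂)

/-- Strong existence of the product of a list of column vectors: all consecutive
products exist and all sums over intervals of length at least two are nonzero. -/
def StrongProd (P : LatticePolytope n) (L : List (Fin n → ℤ)) : Prop :=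
  L ≠ [] ∧ (∀ x ∈ L, P.IsColVec x) ∧
  (∀ i : ℕ, ∀ h : i + 1 < L.length,
      P.ProdEx (L.get ⟨i, Nat.lt_of_succ_lt h⟩) (L.get ⟨i + 1, h⟩)) ∧
  (∀ r s : ℕ, r < s → s < L.length → ((L.drop r).take (s + 1 - r)).sum ≠ 0)

/-- `[V]` : the set of strongly existing products of elements of `V`. -/
def bra (P : LatticePolytope n) (V : Set (Fin n → ℤ)) : Set (Fin n → ℤ) :=
  {w | ∃ L : List (Fin n → ℤ), (∀ x ∈ L, x ∈ V) ∧ P.StrongProd L ∧ L.sum = w}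

/-- `⟨V⟩` : the set of weakly existing products of elements of `V`. -/
def ket (P : LatticePolytope n) (V : Set (Fin n → ℤ)) : Set (Fin n → ℤ) :=
  {w | ∃ L : List (Fin n → ℤ), (∀ x ∈ L, x ∈ V) ∧ P.WeakProd L ∧ L.sum = w}

end LatticePolytope

/-- An admissible finite directed graph (on vertex set `Fin k`): no isolated
vertices, no loops, and an edge `a → b` is the unique directed path from `a` to
`b`. -/
structure GoodGraph (k : ℕ) (E : Fin k → Fin k → Prop) : Prop where
  no_isolated : ∀ a, (∃ b, E a b) ∨ (∃ b, E b a)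
  no_loop : ∀ a, ¬ E a a
  unique_path : ∀ a b, E a b →
    ¬ ∃ c, Relation.TransGen E a c ∧ Relation.TransGen E c b

/-- A `Y`-graph: every vertex is the endpoint of at most one edge. -/
def IsYGraph (k : ℕ) (E : Fin k → Fin k → Prop) : Prop :=
  ∀ a b c, E b a → E c a → b = c

namespace LatticePolytope

variable {n : ℕ}

/-- The graph `E` supports the system `V`: `E` is admissible, and equivalence
classes of paths (i.e. reachable pairs of vertices) are in bijection with `[V]`
compatibly with the partial product structures. -/
def Supports (P : LatticePolytope n) (V : Set (Fin n → ℤ)) (k : ℕ)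
    (E : Fin k → Fin k → Prop) : Prop :=
  GoodGraph k E ∧
  ∃ f : {w // w ∈ P.bra V} → {p : Fin k × Fin k // Relation.TransGen E p.1 p.2},
    Function.Bijective f ∧
    ∀ u v : {w // w ∈ P.bra V},
      (P.ProdEx u.1 v.1 ↔ (f u).1.2 = (f v).1.1) ∧
      ∀ h : u.1 + v.1 ∈ P.bra V, P.ProdEx u.1 v.1 →
        (f ⟨u.1 + v.1, h⟩).1 = ((f u).1.1, (f v).1.2)

/-- `V` is a rigid system of column vectors of `P`. -/
def IsRigid (P : LatticePolytope n) (V : Set (Fin n → ℤ)) : Prop :=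
  V ⊆ P.Col ∧
  (∀ w, w ∈ P.bra V → -w ∉ P.bra V) ∧
  P.bra V = P.ket V ∧
  ∃ (k : ℕ) (E : Fin k → Fin k → Prop), P.Supports V k E

/-- `V` is a `Y`-rigid system of column vectors of `P`. -/
def IsYRigid (P : LatticePolytope n) (V : Set (Fin n → ℤ)) : Prop :=
  V ⊆ P.Col ∧
  (∀ w, w ∈ P.bra V → -w ∉ P.bra V) ∧
  P.bra V = P.ket V ∧
  ∃ (k : ℕ) (E : Fin k → Fin k → Prop), IsYGraph k E ∧ P.Supports V k E

/-- `w` is an irreducible element of `[V]`. -/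
def Irred (P : LatticePolytope n) (V : Set (Fin n → ℤ)) (w : Fin n → ℤ) : Prop :=
  w ∈ P.bra V ∧
  ¬ ∃ u v : Fin n → ℤ, u ∈ P.ket V ∧ v ∈ P.ket V ∧ P.ProdEx u v ∧ u + v = w

/-- The submonoid `S_P ⊆ ℤ^{n+1}` generated by `{(x,1) : x ∈ L_P}`. -/
def SP (P : LatticePolytope n) : AddSubmonoid ((Fin n → ℤ) × ℤ) :=
  AddSubmonoid.closure {p | ∃ x ∈ P.latticePoints, p = (x, (1 : ℤ))}

/-- The height of `z ∈ ℤ^{n+1}` over the facet `F`. -/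
def htF {P : LatticePolytope n} (F : P.Facet) (z : (Fin n → ℤ) × ℤ) : ℤ :=
  F.form z.1 - z.2 * F.b

end LatticePolytope

/-- `P` is `Col`-divisible: conditions (CD1) and (CD2) on products of column
vectors. -/
def LatticePolytope.ColDivisible {n : ℕ} (P : LatticePolytope n) : Prop :=
  (∀ a b c : Fin n → ℤ, a ≠ b → P.ProdEx a c → P.ProdEx b c →
      ∃ d, (P.ProdEx d b ∧ d + b = a) ∨ (P.ProdEx d a ∧ d + a = b)) ∧
  (∀ a b c d : Fin n → ℤ, P.ProdEx a b → P.ProdEx c d → a + b = c + d → a ≠ c →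
      ∃ t, (P.ProdEx c t ∧ c + t = a ∧ P.ProdEx t b ∧ t + b = d) ∨
           (P.ProdEx a t ∧ a + t = c ∧ P.ProdEx t d ∧ t + d = b))

/-- A facet is a base facet if it is the base facet of some column vector. -/
def LatticePolytope.IsBase {n : ℕ} (P : LatticePolytope n) (F : P.Facet) : Prop :=
  ∃ z, P.IsBaseFacet z F

/-- A column vector is terminal if it has positive height over no base facet. -/
def LatticePolytope.TerminalVec {n : ℕ} (P : LatticePolytope n) (v : Fin n → ℤ) : Prop :=
  P.IsColVec v ∧ ¬ ∃ F : P.Facet, P.IsBase F ∧ 0 < F.form v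

/-- The unit `N`-simplex `conv(0, e_1, …, e_N) ⊆ ℝ^N` as a lattice polytope. -/
def unitSimplex (N : ℕ) : LatticePolytope N where
  verts := insert 0 (Finset.univ.image fun i : Fin N => Pi.single i (1 : ℤ))
  nonem := ⟨0, Finset.mem_insert_self _ _⟩

/-- Doubling of `P` along the facet with support form `φ` (with `b = 0`), where
`u` is a fixed lattice vector with `φ u = 1`: the convex hull of `P × {0}` and
`ρ(P)`, `ρ(x) = (x - φ(x)·u, φ(x))`. -/
def LatticePolytope.dbl {n : ℕ} (P : LatticePolytope n) (φ : (Fin n → ℤ) →+ ℤ)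
    (u : Fin n → ℤ) : LatticePolytope (n + 1) where
  verts := (P.verts.image fun x => Fin.snoc x (0 : ℤ)) ∪
           (P.verts.image fun x => Fin.snoc (x - φ x • u) (φ x))
  nonem := (P.nonem.image _).mono Finset.subset_union_left

/-- The polytopal algebra `R[P] = R[S_P]`, realized as the subalgebra of
`R[ℤ^{n+1}]` generated by the monomials `(x,1)`, `x ∈ L_P`. -/
def polyAlg (R : Type) [CommRing R] {n : ℕ} (P : LatticePolytope n) :
    Subalgebra R (AddMonoidAlgebra R ((Fin n → ℤ) × ℤ)) :=
  Algebra.adjoin R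
    {a | ∃ x ∈ P.latticePoints, a = AddMonoidAlgebra.single (x, (1 : ℤ)) (1 : R)}

/-- The multiplicative map `z ↦ z·(1 + λv)^{ht_v z}` on `ℤ^{n+1}`. -/
def phiMap (R : Type) [CommRing R] {n : ℕ} {P : LatticePolytope n}
    (v : Fin n → ℤ) (F : P.Facet) (lam : R) (z : (Fin n → ℤ) × ℤ) :
    AddMonoidAlgebra R ((Fin n → ℤ) × ℤ) :=
  AddMonoidAlgebra.single z 1 *
    (1 + AddMonoidAlgebra.single ((v, (0 : ℤ))) lam) ^ (LatticePolytope.htF F z).toNat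

/-- An element of `R[ℤ^{n+1}]` is homogeneous of degree `d`. -/
def Homog (R : Type) [CommRing R] {n : ℕ}
    (a : AddMonoidAlgebra R ((Fin n → ℤ) × ℤ)) (d : ℕ) : Prop :=
  ∀ s ∈ a.coeff.support, s.2 = (d : ℤ)

/-- `e` is the elementary automorphism `e_v^λ` of `R[P]`: on monomials from `S_P`
it is given by `z ↦ z·(1 + λv)^{ht_v z}`. -/
def ElemAutProp (R : Type) [CommRing R] {n : ℕ} {P : LatticePolytope n}
    (v : Fin n → ℤ) (F : P.Facet) (lam : R)
    (e : polyAlg R P →ₐ[R] polyAlg R P) : Prop :=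
  ∀ z ∈ P.SP, ∀ hz : AddMonoidAlgebra.single z (1 : R) ∈ polyAlg R P,
    ((e ⟨AddMonoidAlgebra.single z 1, hz⟩ : polyAlg R P) :
        AddMonoidAlgebra R ((Fin n → ℤ) × ℤ)) = phiMap R v F lam z

/-- `e` is a graded endomorphism of `R[P]`. -/
def IsGradedEndo (R : Type) [CommRing R] {n : ℕ} {P : LatticePolytope n}
    (e : polyAlg R P →ₐ[R] polyAlg R P) : Prop :=
  ∀ (a : polyAlg R P) (d : ℕ), Homog R (a : AddMonoidAlgebra R ((Fin n → ℤ) × ℤ)) d →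
    Homog R ((e a : polyAlg R P) : AddMonoidAlgebra R ((Fin n → ℤ) × ℤ)) d

namespace Statement10Aux

open LatticePolytope

variable {n : ℕ} {P : LatticePolytope n}

lemma toR_add (x y : Fin n → ℤ) : toR (x + y) = toR x + toR y := by
  funext i; simp [toR]

lemma formR_add (φ : (Fin n → ℤ) →+ ℤ) (x y : Fin n → ℝ) :
    formR φ (x + y) = formR φ x + formR φ y := by
  simp [formR, add_mul, Finset.sum_add_distrib]

lemma formR_smul (φ : (Fin n → ℤ) →+ ℤ) (c : ℝ) (x : Fin n → ℝ) :
    formR φ (c • x) = c * formR φ x := by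
  simp [formR, Finset.mul_sum, mul_assoc]

lemma formR_toR (φ : (Fin n → ℤ) →+ ℤ) (z : Fin n → ℤ) :
    formR φ (toR z) = (φ z : ℝ) := by
  have hz : z = ∑ i, Pi.single i (z i) := by
    rw [Finset.univ_sum_single]
  have : φ z = ∑ i, z i * φ (Pi.single i 1) := by
    conv_lhs => rw [hz]
    rw [map_sum]
    congr 1; funext i
    have : (Pi.single i (z i) : Fin n → ℤ) = z i • (Pi.single i 1 : Fin n → ℤ) := by
      rw [← Pi.single_smul, smul_eq_mul, mul_one]
    rw [this, map_zsmul, smul_eq_mul]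
  rw [this]
  push_cast [formR, toR]
  rfl

lemma verts_mem_lattice {z : Fin n → ℤ} (hz : z ∈ P.verts) : z ∈ P.latticePoints :=
  subset_convexHull ℝ _ (Finset.mem_coe.2 (Finset.mem_image_of_mem toR hz))

lemma carrier_convex : Convex ℝ P.carrier := convex_convexHull _ _

lemma carrier_compact : IsCompact P.carrier :=
  ((P.verts.image toR).finite_toSet).isCompact_convexHull (𝕜 := ℝ)

lemma carrier_bounded : ∃ R : ℝ, ∀ x ∈ P.carrier, ‖x‖ ≤ R := by
  obtain ⟨R, hR⟩ := (carrier_compact (P := P)).isBounded.subset_closedBall 0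
  exact ⟨R, fun x hx => mem_closedBall_zero_iff.1 (hR hx)⟩

variable {F : P.Facet}

lemma lattice_form_ge {x : Fin n → ℤ} (hx : x ∈ P.latticePoints) : F.b ≤ F.form x := by
  have := F.min_le (toR x) hx
  rw [formR_toR] at this
  exact_mod_cast this

lemma form_eq_b_of_mem {x : Fin n → ℤ} (hx : toR x ∈ F.set) : F.form x = F.b := by
  have := hx.2
  rw [formR_toR] at this
  exact_mod_cast this

lemma lattice_notin_set {x : Fin n → ℤ} (h : F.b + 1 ≤ F.form x) : toR x ∉ F.set := by
  intro hx
  have := form_eq_b_of_mem hx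
  omega

/-- A vertex of `P` not lying on the facet `F`. -/
lemma exists_vert_off_facet (hfd : P.IsFullDim) (F : P.Facet) :
    ∃ z ∈ P.verts, F.b + 1 ≤ F.form z := by
  by_contra hall
  push_neg at hall
  have hall' : ∀ z ∈ P.verts, F.form z = F.b := by
    intro z hz
    have h1 := hall z hz
    have h2 := lattice_form_ge (verts_mem_lattice hz) (F := F)
    omega
  have hconv : Convex ℝ {x : Fin n → ℝ | formR F.form x = (F.b : ℝ)} := by
    intro x hx y hy a b ha hb hab
    simp only [Set.mem_setOf_eq] at *
    rw [formR_add, formR_smul, formR_smul, hx, hy, ← add_mul, hab, one_mul]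
  have hsub : P.carrier ⊆ {x : Fin n → ℝ | formR F.form x = (F.b : ℝ)} := by
    apply convexHull_min _ hconv
    intro x hx
    obtain ⟨z, hz, rfl⟩ := Finset.mem_image.1 (Finset.mem_coe.1 hx)
    show formR F.form (toR z) = (F.b : ℝ)
    rw [formR_toR]
    exact_mod_cast hall' z hz
  obtain ⟨x₀, hx₀⟩ := hfd
  have hx₀' : x₀ ∈ interior {x : Fin n → ℝ | formR F.form x = (F.b : ℝ)} :=
    interior_mono hsub hx₀
  obtain ⟨ε, hε, hball⟩ := Metric.isOpen_iff.1 isOpen_interior x₀ hx₀'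
  obtain ⟨u, hu⟩ := F.surj 1
  set y := toR u with hy
  have hyform : formR F.form y = 1 := by rw [formR_toR, hu]; norm_num
  have hyne : y ≠ 0 := by
    intro h
    rw [h] at hyform
    simp [formR] at hyform
  have hny : (0:ℝ) < ‖y‖ := norm_pos_iff.2 hyne
  set p := x₀ + (ε / (2 * ‖y‖)) • y with hp
  have hpos : (0:ℝ) < ε / (2 * ‖y‖) := by positivity
  have hpball : p ∈ Metric.ball x₀ ε := by
    rw [Metric.mem_ball, dist_eq_norm]
    have : p - x₀ = (ε / (2 * ‖y‖)) • y := by rw [hp]; abel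
    rw [this, norm_smul, Real.norm_eq_abs, abs_of_pos hpos]
    rw [div_mul_eq_mul_div, mul_comm]
    rw [div_lt_iff₀ (by positivity)]
    nlinarith
  have hx0f : x₀ ∈ {x : Fin n → ℝ | formR F.form x = (F.b : ℝ)} := interior_subset hx₀'
  have hpf : p ∈ {x : Fin n → ℝ | formR F.form x = (F.b : ℝ)} := interior_subset (hball hpball)
  simp only [Set.mem_setOf_eq] at hx0f hpf
  rw [hp, formR_add, formR_smul, hyform, hx0f, mul_one] at hpf
  nlinarith

/-- The height of a column vector over its base facet is at most `-1`. -/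
lemma form_base_neg (hfd : P.IsFullDim) {v : Fin n → ℤ} (hv : P.IsBaseFacet v F) :
    F.form v ≤ -1 := by
  by_contra hge
  push_neg at hge
  have hge' : 0 ≤ F.form v := by omega
  obtain ⟨z, hzv, hzf⟩ := exists_vert_off_facet hfd F
  have key : ∀ k : ℕ, (z + k • v) ∈ P.latticePoints ∧ F.b + 1 ≤ F.form (z + k • v) := by
    intro k
    induction k with
    | zero => simpa using ⟨verts_mem_lattice hzv, hzf⟩
    | succ k ih =>
      obtain ⟨ih1, ih2⟩ := ih
      have hnot : toR (z + k • v) ∉ F.set := lattice_notin_set ih2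
      have hmem : toR (z + k • v + v) ∈ P.carrier := hv.2 _ ih1 hnot
      have heq : z + (k + 1) • v = z + k • v + v := by
        rw [add_nsmul, one_nsmul, add_assoc]
      constructor
      · rw [heq]; exact hmem
      · rw [heq, map_add]
        omega
  obtain ⟨R, hR⟩ := carrier_bounded (P := P)
  obtain ⟨i, hi⟩ : ∃ i, v i ≠ 0 := by
    by_contra hall
    push_neg at hall
    exact hv.1 (funext hall)
  obtain ⟨k, hk⟩ := exists_nat_gt (R + |(z i : ℝ)|)
  obtain ⟨hk1, _⟩ := key k
  have hb : ‖toR (z + k • v)‖ ≤ R := hR _ hk1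
  have hcoord : |((z + k • v) i : ℝ)| ≤ R := by
    calc |((z + k • v) i : ℝ)| = ‖toR (z + k • v) i‖ := by rw [Real.norm_eq_abs]; rfl
    _ ≤ ‖toR (z + k • v)‖ := norm_le_pi_norm _ i
    _ ≤ R := hb
  have hvi : (1:ℝ) ≤ |(v i : ℝ)| := by
    have : (1:ℤ) ≤ |v i| := Int.one_le_abs hi
    exact_mod_cast this
  have happ : ((z + k • v) i : ℝ) = (z i : ℝ) + (k : ℝ) * (v i : ℝ) := by
    push_cast
    simp [Pi.add_apply, Pi.smul_apply]
  have hklarge : (k : ℝ) ≤ |(k : ℝ) * (v i : ℝ)| := by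
    rw [abs_mul, Nat.abs_cast]
    nlinarith [Nat.cast_nonneg (α := ℝ) k]
  have h := abs_add_le (((z + k • v) i : ℝ)) (-(z i : ℝ))
  rw [abs_neg] at h
  have e : ((z + k • v) i : ℝ) + -(z i : ℝ) = (k:ℝ) * (v i:ℝ) := by rw [happ]; ring
  rw [e] at h
  linarith


/-- `formR` as a continuous linear map. -/
def formCLM (φ : (Fin n → ℤ) →+ ℤ) : (Fin n → ℝ) →L[ℝ] ℝ :=
  LinearMap.toContinuousLinearMap
    { toFun := formR φ
      map_add' := formR_add φ
      map_smul' := fun c x => by simpa using formR_smul φ c x }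

lemma formCLM_apply (φ : (Fin n → ℤ) →+ ℤ) (x : Fin n → ℝ) :
    formCLM φ x = formR φ x := rfl

variable {F : P.Facet}

lemma facet_isExposed (F : P.Facet) : IsExposed ℝ P.carrier F.set := by
  intro _
  refine ⟨-formCLM F.form, ?_⟩
  ext x
  constructor
  · rintro ⟨hx, hfx⟩
    refine ⟨hx, fun y hy => ?_⟩
    simp only [ContinuousLinearMap.neg_apply, neg_le_neg_iff, formCLM_apply]
    rw [hfx]
    exact F.min_le y hy
  · rintro ⟨hx, hmax⟩
    refine ⟨hx, le_antisymm ?_ (F.min_le x hx)⟩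
    obtain ⟨y₀, hy₀, hy₀f⟩ := F.attained
    have := hmax y₀ hy₀
    simp only [ContinuousLinearMap.neg_apply, neg_le_neg_iff, formCLM_apply] at this
    rw [hy₀f] at this
    exact this

lemma facet_set_convex (F : P.Facet) : Convex ℝ F.set := by
  intro x hx y hy a b ha hb hab
  refine ⟨carrier_convex hx.1 hy.1 ha hb hab, ?_⟩
  rw [formR_add, formR_smul, formR_smul, hx.2, hy.2, ← add_mul, hab, one_mul]

lemma facet_set_closed (F : P.Facet) : IsClosed F.set := by
  have : F.set = P.carrier ∩ (formCLM F.form) ⁻¹' {(F.b : ℝ)} := by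
    ext x
    exact ⟨fun h => ⟨h.1, h.2⟩, fun h => ⟨h.1, h.2⟩⟩
  rw [this]
  exact (carrier_compact (P := P)).isClosed.inter
    (isClosed_singleton.preimage (formCLM F.form).continuous)

lemma facet_set_compact (F : P.Facet) : IsCompact F.set :=
  (carrier_compact (P := P)).of_isClosed_subset (facet_set_closed F) fun _ hx => hx.1

/-- Any two base facets of the same column vector have the same underlying set. -/
lemma baseFacet_set_subset (hfd : P.IsFullDim) {v : Fin n → ℤ} {F G : P.Facet}
    (hvF : P.IsBaseFacet v F) (hvG : P.IsBaseFacet v G) : F.set ⊆ G.set := by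
  have hlat : ∀ z ∈ P.latticePoints, toR z ∈ F.set → toR z ∈ G.set := by
    intro z hz hzF
    by_contra hzG
    have hm : (z + v) ∈ P.latticePoints := hvG.2 z hz hzG
    have h1 : F.b ≤ F.form (z + v) := lattice_form_ge hm
    have h2 : F.form (z + v) = F.form z + F.form v := map_add _ _ _
    have h3 : F.form z = F.b := form_eq_b_of_mem hzF
    have h4 : F.form v ≤ -1 := form_base_neg hfd hvF
    omega
  have hext : F.set.extremePoints ℝ ⊆ G.set := by
    intro x hx
    have hx' : x ∈ P.carrier.extremePoints ℝ :=
      ((facet_isExposed F).isExtreme).extremePoints_subset_extremePoints hx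
    have hx'' : x ∈ (↑(P.verts.image toR) : Set (Fin n → ℝ)) :=
      extremePoints_convexHull_subset hx'
    obtain ⟨z, hz, rfl⟩ := Finset.mem_image.1 (Finset.mem_coe.1 hx'')
    exact hlat z (verts_mem_lattice hz) hx.1
  calc F.set = closure (convexHull ℝ (F.set.extremePoints ℝ)) :=
        (closure_convexHull_extremePoints (facet_set_compact F) (facet_set_convex F)).symm
    _ ⊆ closure (convexHull ℝ G.set) := closure_mono (convexHull_mono hext)
    _ = G.set := by rw [(facet_set_convex G).convexHull_eq, (facet_set_closed G).closure_eq]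

lemma baseFacet_set_unique (hfd : P.IsFullDim) {v : Fin n → ℤ} {F G : P.Facet}
    (hvF : P.IsBaseFacet v F) (hvG : P.IsBaseFacet v G) : F.set = G.set :=
  (baseFacet_set_subset hfd hvF hvG).antisymm (baseFacet_set_subset hfd hvG hvF)

lemma strong_sum_ne_zero {L : List (Fin n → ℤ)} (h : P.StrongProd L) : L.sum ≠ 0 := by
  obtain ⟨hne, hcol, hcons, hint⟩ := h
  rcases L with _ | ⟨v, _ | ⟨w, T⟩⟩
  · exact absurd rfl hne
  · obtain ⟨F, hF⟩ := hcol v (by simp)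
    simpa using hF.1
  · have hs : (v :: w :: T).length - 1 < (v :: w :: T).length := by simp
    have hr : 0 < (v :: w :: T).length - 1 := by simp
    have := hint 0 ((v :: w :: T).length - 1) hr hs
    have harith : (v :: w :: T).length - 1 + 1 - 0 = (v :: w :: T).length := by
      simp
    rw [harith, List.drop_zero, List.take_length] at this
    exact this

lemma strong_tail {v w : Fin n → ℤ} {T : List (Fin n → ℤ)}
    (h : P.StrongProd (v :: w :: T)) : P.StrongProd (w :: T) := by
  obtain ⟨_, hcol, hcons, hint⟩ := h
  refine ⟨by simp, fun x hx => hcol x (by simp [hx]), ?_, ?_⟩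
  · intro i hi
    have h2 : i + 1 + 1 < (v :: w :: T).length := by
      simp only [List.length_cons] at hi ⊢
      omega
    exact hcons (i + 1) h2
  · intro r s hrs hs
    have hs2 : s + 1 < (v :: w :: T).length := by
      simp only [List.length_cons] at hs ⊢
      omega
    have := hint (r + 1) (s + 1) (by omega) hs2
    have harith : s + 1 + 1 - (r + 1) = s + 1 - r := by omega
    rw [harith] at this
    exact this

lemma strong_head_colvec {v : Fin n → ℤ} {T : List (Fin n → ℤ)}
    (h : P.StrongProd (v :: T)) : P.IsColVec v := h.2.1 v (by simp)

lemma strong_head_prodEx {v w : Fin n → ℤ} {T : List (Fin n → ℤ)}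
    (h : P.StrongProd (v :: w :: T)) : P.ProdEx v w :=
  h.2.2.1 0 (by simp)

lemma chain (hfd : P.IsFullDim) :
    ∀ (T : List (Fin n → ℤ)) (v : Fin n → ℤ), P.StrongProd (v :: T) →
      ∀ x : Fin n → ℤ, x ∈ P.latticePoints →
        (∀ F : P.Facet, P.IsBaseFacet v F → toR x ∉ F.set) →
        (x + (v :: T).sum) ∈ P.latticePoints := by
  intro T
  induction T with
  | nil =>
    intro v h x hx hxF
    obtain ⟨F, hF⟩ := strong_head_colvec h
    have hmem : toR (x + v) ∈ P.carrier := hF.2 x hx (hxF F hF)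
    have hsum : (v :: List.nil).sum = v := by simp
    rw [hsum]
    exact hmem
  | cons w T ih =>
    intro v h x hx hxF
    obtain ⟨F, hF⟩ := strong_head_colvec h
    have hx1 : (x + v) ∈ P.latticePoints := hF.2 x hx (hxF F hF)
    have hpe := strong_head_prodEx h
    have hx1F : ∀ G : P.Facet, P.IsBaseFacet w G → toR (x + v) ∉ G.set := by
      intro G hG
      exact hpe.2.2.2 F G hF hG x hx (hxF F hF)
    have hrec := ih w (strong_tail h) (x + v) hx1 hx1F
    have heq : x + (v :: w :: T).sum = (x + v) + (w :: T).sum := by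
      simp only [List.sum_cons]
      abel
    rw [heq]
    exact hrec

lemma bra_baseFacet (hfd : P.IsFullDim) {V : Set (Fin n → ℤ)} {w : Fin n → ℤ}
    (hw : w ∈ P.bra V) : ∃ F : P.Facet, P.IsBaseFacet w F := by
  obtain ⟨L, hmemL, hstrong, rfl⟩ := hw
  rcases L with _ | ⟨v, T⟩
  · exact absurd rfl hstrong.1
  obtain ⟨F, hF⟩ := strong_head_colvec hstrong
  refine ⟨F, strong_sum_ne_zero hstrong, ?_⟩
  intro x hx hxF
  have hxF' : ∀ G : P.Facet, P.IsBaseFacet v G → toR x ∉ G.set := by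
    intro G hG
    rw [← baseFacet_set_unique hfd hF hG]
    exact hxF
  exact chain hfd T v hstrong x hx hxF'

lemma merge (hfd : P.IsFullDim) {V : Set (Fin n → ℤ)} (hV : P.IsRigid V)
    {a b : Fin n → ℤ} (ha : a ∈ P.bra V) (hb : b ∈ P.bra V) {F : P.Facet}
    (hFa : P.IsBaseFacet a F) (hform : 1 ≤ F.form b) (hne : b + a ≠ 0) :
    b + a ∈ P.bra V := by
  have hpe : P.ProdEx b a := by
    refine ⟨bra_baseFacet hfd hb, bra_baseFacet hfd ha, hne, ?_⟩
    intro Fu Fv hu hv x hx hxFu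
    have hset : Fv.set = F.set := baseFacet_set_unique hfd hv hFa
    rw [hset]
    intro hmem
    have h1 : F.form (x + b) = F.b := form_eq_b_of_mem hmem
    have h2 : F.b ≤ F.form x := lattice_form_ge hx
    rw [map_add] at h1
    omega
  have hket := hV.2.2.1
  obtain ⟨Lb, hLbV, hLbW, hLbs⟩ : b ∈ P.ket V := hket ▸ hb
  obtain ⟨La, hLaV, hLaW, hLas⟩ : a ∈ P.ket V := hket ▸ ha
  have hW : P.WeakProd (Lb ++ La) :=
    LatticePolytope.WeakProd.mul Lb La hLbW hLaW (by rw [hLbs, hLas]; exact hpe)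
  have hkmem : b + a ∈ P.ket V := by
    refine ⟨Lb ++ La, ?_, hW, by rw [List.sum_append, hLbs, hLas]⟩
    intro x hx
    rcases List.mem_append.1 hx with h | h
    · exact hLbV x h
    · exact hLaV x h
  rw [hket]
  exact hkmem

lemma multiset_sum_ne (hfd : P.IsFullDim) {V : Set (Fin n → ℤ)} (hV : P.IsRigid V) :
    ∀ (N : ℕ) (s : Multiset (Fin n → ℤ)), Multiset.card s = N → s ≠ 0 →
      (∀ x ∈ s, x ∈ P.bra V) → s.sum ≠ 0 := by
  intro N
  induction N using Nat.strong_induction_on with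
  | _ N ih =>
    intro s hcard hs0 hmem hsum
    obtain ⟨a, ha⟩ := Multiset.exists_mem_of_ne_zero hs0
    obtain ⟨F, hFa⟩ := bra_baseFacet hfd (hmem a ha)
    by_cases hc : Multiset.card s = 1
    · obtain ⟨x, rfl⟩ := Multiset.card_eq_one.1 hc
      rw [Multiset.sum_singleton] at hsum
      rw [Multiset.mem_singleton] at ha
      rw [ha, hsum] at hFa
      exact hFa.1 rfl
    · have hcard2 : 2 ≤ Multiset.card s := by
        have h1 : 0 < Multiset.card s := Multiset.card_pos.2 hs0
        omega
      have hFa1 : F.form a ≤ -1 := form_base_neg hfd hFa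
      have hexists : ∃ b ∈ s, 1 ≤ F.form b := by
        by_contra hall
        push_neg at hall
        have h0 : (Multiset.map (⇑F.form) s).sum = 0 := by
          rw [← map_multiset_sum, hsum, map_zero]
        have hdecomp : s = a ::ₘ s.erase a := (Multiset.cons_erase ha).symm
        have h1 : (Multiset.map (⇑F.form) s).sum
            = F.form a + (Multiset.map (⇑F.form) (s.erase a)).sum := by
          conv_lhs => rw [hdecomp]
          rw [Multiset.map_cons, Multiset.sum_cons]
        have h2 : (Multiset.map (⇑F.form) (s.erase a)).sum ≤ 0 := by
          have := Multiset.sum_le_card_nsmul (Multiset.map (⇑F.form) (s.erase a)) 0 ?_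
          · simpa using this
          · intro x hx
            obtain ⟨y, hy, rfl⟩ := Multiset.mem_map.1 hx
            have : F.form y ≤ 0 := by
              have := hall y (Multiset.mem_of_mem_erase hy)
              omega
            exact this
        omega
      obtain ⟨b, hbs, hFb⟩ := hexists
      have hba : b ≠ a := by
        intro h
        rw [h] at hFb
        omega
      by_cases hzero : b + a = 0
      · have hab : a = -b := by
          have := congrArg (fun u => u - b) hzero
          simpa [add_sub_cancel_left] using by
            have : a = -b := by
              have h' : b + a = 0 := hzero
              have := neg_eq_of_add_eq_zero_right h'
              rw [← this]
            exact this
        exact hV.2.1 b (hmem b hbs) (hab ▸ hmem a ha)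
      · have hnew : b + a ∈ P.bra V := merge hfd hV (hmem a ha) (hmem b hbs) hFa hFb hzero
        have hbmem : b ∈ s.erase a := (Multiset.mem_erase_of_ne hba).2 hbs
        set s' : Multiset (Fin n → ℤ) := (b + a) ::ₘ ((s.erase a).erase b) with hs'
        have hcard' : Multiset.card s' = N - 1 := by
          rw [hs', Multiset.card_cons, Multiset.card_erase_of_mem hbmem,
            Multiset.card_erase_of_mem ha]
          simp only [Nat.pred_eq_sub_one]
          omega
        have hsum' : s'.sum = 0 := by
          have e1 : s.sum = a + (s.erase a).sum := by
            conv_lhs => rw [← Multiset.cons_erase ha]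
            rw [Multiset.sum_cons]
          have e2 : (s.erase a).sum = b + ((s.erase a).erase b).sum := by
            conv_lhs => rw [← Multiset.cons_erase hbmem]
            rw [Multiset.sum_cons]
          rw [hs', Multiset.sum_cons]
          rw [e1, e2] at hsum
          rw [← hsum]
          abel
        have hmem' : ∀ x ∈ s', x ∈ P.bra V := by
          intro x hx
          rcases Multiset.mem_cons.1 hx with rfl | hx'
          · exact hnew
          · exact hmem x (Multiset.mem_of_mem_erase (Multiset.mem_of_mem_erase hx'))
        exact ih (N - 1) (by omega) s' hcard' (by simp [hs']) hmem' hsum'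

end Statement10Aux

/-- For a rigid system `V`, any nonempty sum of elements of `[V]` (repetitions
allowed) is nonzero. -/
theorem statement10 {n : ℕ} (P : LatticePolytope n) (hfd : P.IsFullDim)
    (hgen : P.AffGen) (V : Set (Fin n → ℤ)) (hV : P.IsRigid V)
    (L : List (Fin n → ℤ)) (hL : L ≠ []) (hmem : ∀ x ∈ L, x ∈ P.bra V) :
    L.sum ≠ 0 := by
  intro h0
  have hne : (↑L : Multiset (Fin n → ℤ)) ≠ 0 := by
    simpa using hL
  refine Statement10Aux.multiset_sum_ne hfd hV
    (Multiset.card (↑L : Multiset (Fin n → ℤ))) (↑L) rfl hne ?_ ?_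
  · intro x hx
    exact hmem x (by simpa using hx)
  · simpa using h0
end
end

section
/- Let P be a full-dimensional lattice polytope whose lattice points affinely generate ℤ^n, and let V ⊆ Col(P) be a rigid system with supporting graph F having N + 1 vertices. Then: (a) there exist a rigid system W ⊆ Col(Δ_N) (Δ_N the unit N-simplex) and a bijection f : [V] → [W] such that for u, v ∈ [V] the product uv exists if and only if f(u)f(v) exists, and then f(uv) = f(u)f(v); (b) every subset U ⊆ [V] is itself a rigid system. -/
open Set

noncomputable section

namespace SimplexAux
open LatticePolytope
variable {N : ℕ}

def eps (a : Fin (N+1)) : Fin N → ℤ := Fin.cases 0 (fun i => Pi.single i 1) a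

@[simp] lemma eps_zero : (eps 0 : Fin N → ℤ) = 0 := rfl

@[simp] lemma eps_succ (i : Fin N) : eps i.succ = Pi.single i (1:ℤ) := by
  simp [eps]

lemma eps_apply (a : Fin (N+1)) (j : Fin N) :
    eps a j = if a = j.succ then 1 else 0 := by
  induction a using Fin.cases with
  | zero => simp [(Fin.succ_ne_zero j).symm]
  | succ i => simp [Pi.single_apply, Fin.succ_inj, eq_comm]

lemma eps_inj : Function.Injective (eps (N := N)) := by
  intro a b h
  induction a using Fin.cases with
  | zero =>
    induction b using Fin.cases with
    | zero => rfl
    | succ j =>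
      have := congrFun h j
      simp [eps_apply] at this
      exact this
  | succ i =>
    induction b using Fin.cases with
    | zero =>
      have := congrFun h i
      simp [eps_apply] at this
      exact this.symm
    | succ j =>
      have := congrFun h i
      simp [eps_apply, Fin.succ_inj] at this
      by_contra hne
      exact hne (by rw [this])

lemma eps_sum (a : Fin (N+1)) : (∑ j, eps a j) = if a = 0 then 0 else 1 := by
  induction a using Fin.cases with
  | zero => simp
  | succ i => simp [Fin.succ_ne_zero, Finset.sum_pi_single]

@[simp] lemma toR_zero : toR (0 : Fin N → ℤ) = 0 := by
  funext j; simp [toR]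

lemma toR_single (i : Fin N) : toR (Pi.single i (1:ℤ)) = Pi.single i (1:ℝ) := by
  funext j; simp [toR, Pi.single_apply]

lemma toR_eps_mem (a : Fin (N+1)) : toR (eps a) ∈ (unitSimplex N).carrier := by
  apply subset_convexHull
  simp only [Finset.coe_image, Set.mem_image, Finset.mem_coe]
  refine ⟨eps a, ?_, rfl⟩
  induction a using Fin.cases with
  | zero => exact Finset.mem_insert_self _ _
  | succ i =>
    refine Finset.mem_insert_of_mem ?_
    simp [eps]

def stdSet (N : ℕ) : Set (Fin N → ℝ) := {x | (∀ i, 0 ≤ x i) ∧ ∑ i, x i ≤ 1}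

lemma convex_stdSet : Convex ℝ (stdSet N) := by
  intro x hx y hy a b ha hb hab
  constructor
  · intro i
    have h1 := hx.1 i; have h2 := hy.1 i
    have : 0 ≤ a * x i + b * y i := by positivity
    simpa using this
  · have : ∑ i, (a • x + b • y) i = a * ∑ i, x i + b * ∑ i, y i := by
      simp [Finset.mul_sum, Finset.sum_add_distrib]
    rw [this]
    calc a * ∑ i, x i + b * ∑ i, y i ≤ a * 1 + b * 1 := by
          gcongr; exacts [hx.2, hy.2]
      _ = 1 := by rw [mul_one, mul_one, hab]

lemma carrier_subset : (unitSimplex N).carrier ⊆ stdSet N := by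
  apply convexHull_min _ convex_stdSet
  intro x hx
  simp only [Finset.coe_image, Set.mem_image, Finset.mem_coe, unitSimplex,
    Finset.mem_insert, Finset.mem_image, Finset.mem_univ, true_and] at hx
  obtain ⟨z, hz | ⟨i, rfl⟩, rfl⟩ := hx
  · subst hz; constructor <;> simp [stdSet]
  · rw [toR_single]
    constructor
    · intro j; simp [Pi.single_apply]; split <;> norm_num
    · simp [Finset.sum_pi_single]

lemma lattice_eq : (unitSimplex N).latticePoints = Set.range (eps (N := N)) := by
  ext z
  constructor
  · intro hz
    have hc := carrier_subset hz
    have hnn : ∀ i, (0:ℤ) ≤ z i := by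
      intro i
      have := hc.1 i
      simp only [toR] at this
      exact_mod_cast this
    have hsum : (∑ i, z i) ≤ 1 := by
      have h0 := hc.2
      simp only [toR] at h0
      have h2 : ((∑ i, z i : ℤ) : ℝ) ≤ 1 := by push_cast; exact h0
      exact_mod_cast h2
    by_cases hall : ∀ i, z i = 0
    · exact ⟨0, by funext j; simp [eps, (hall j).symm]⟩
    · push_neg at hall
      obtain ⟨i, hi⟩ := hall
      have h1 : 1 ≤ z i := lt_of_le_of_ne (hnn i) (Ne.symm hi)
      have hrest : ∑ j ∈ Finset.univ.erase i, z j = 0 ∧ z i = 1 := by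
        have hsplit : z i + ∑ j ∈ Finset.univ.erase i, z j = ∑ j, z j := by
          rw [Finset.add_sum_erase _ _ (Finset.mem_univ i)]
        have hrnn : 0 ≤ ∑ j ∈ Finset.univ.erase i, z j :=
          Finset.sum_nonneg fun j _ => hnn j
        omega
      refine ⟨i.succ, ?_⟩
      funext j
      rcases eq_or_ne j i with rfl | hne
      · simp [eps, hrest.2]
      · have : z j = 0 :=
          (Finset.sum_eq_zero_iff_of_nonneg (fun j _ => hnn j)).mp hrest.1 j
            (Finset.mem_erase.mpr ⟨hne, Finset.mem_univ j⟩)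
        simp [eps, Pi.single_apply, hne.symm, this]
  · rintro ⟨a, rfl⟩
    exact toR_eps_mem a

/-- decomposition of a vector into coordinates -/
lemma pi_decomp (v : Fin N → ℝ) : v = ∑ j, v j • (Pi.single j 1 : Fin N → ℝ) := by
  funext k
  rw [Finset.sum_apply]
  simp [Pi.single_apply]

def coordForm (i : Fin N) : (Fin N → ℤ) →+ ℤ := Pi.evalAddMonoidHom (fun _ => ℤ) i

def sumForm (N : ℕ) : (Fin N → ℤ) →+ ℤ where
  toFun z := -∑ j, z j
  map_zero' := by simp
  map_add' x y := by simp [Finset.sum_add_distrib]; ring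

lemma formR_coord (i : Fin N) (x : Fin N → ℝ) : formR (coordForm i) x = x i := by
  simp [formR, coordForm, Pi.single_apply]

lemma formR_sum (x : Fin N → ℝ) : formR (sumForm N) x = -∑ j, x j := by
  simp [formR, sumForm, Finset.sum_pi_single, Finset.sum_neg_distrib]

end SimplexAux
namespace SimplexAux
open LatticePolytope
variable {N : ℕ}

lemma ker_dim (L : (Fin N → ℝ) →ₗ[ℝ] ℝ) (hs : Function.Surjective L) :
    Module.finrank ℝ (LinearMap.ker L) + 1 = N := by
  have h := LinearMap.finrank_range_add_finrank_ker L
  rw [LinearMap.range_eq_top.mpr hs, finrank_top, Module.finrank_self] at h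
  rw [Module.finrank_pi] at h
  simp only [Fintype.card_fin] at h
  omega

def coordFacet (i : Fin N) : (unitSimplex N).Facet where
  form := coordForm i
  surj := fun m => ⟨Pi.single i m, by simp [coordForm]⟩
  b := 0
  min_le := by
    intro x hx
    have := (carrier_subset hx).1 i
    simpa [formR_coord] using this
  attained := by
    refine ⟨0, ?_, ?_⟩
    · simpa using toR_eps_mem (0 : Fin (N+1))
    · simp [formR_coord]
  dim := by
    have hset : {x ∈ (unitSimplex N).carrier | formR (coordForm i) x = ((0:ℤ):ℝ)} =
        {x ∈ (unitSimplex N).carrier | x i = 0} := by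
      ext x; simp [formR_coord]
    rw [hset]
    have hvs : vectorSpan ℝ {x ∈ (unitSimplex N).carrier | x i = 0} =
        LinearMap.ker (LinearMap.proj (R := ℝ) (φ := fun _ : Fin N => ℝ) i) := by
      apply le_antisymm
      · rw [vectorSpan_def]
        rw [Submodule.span_le]
        rintro v ⟨x, hx, y, hy, rfl⟩
        simp only [SetLike.mem_coe, LinearMap.mem_ker, LinearMap.proj_apply]
        have : (x -ᵥ y) i = x i - y i := rfl
        rw [this, hx.2, hy.2, sub_zero]
      · intro v hv
        simp only [LinearMap.mem_ker, LinearMap.proj_apply] at hv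
        rw [pi_decomp v]
        apply Submodule.sum_mem
        intro j _
        rcases eq_or_ne j i with rfl | hne
        · rw [hv, zero_smul]; exact Submodule.zero_mem _
        · apply Submodule.smul_mem
          have h1 : (Pi.single j 1 : Fin N → ℝ) ∈
              {x ∈ (unitSimplex N).carrier | x i = 0} := by
            constructor
            · rw [← toR_single]; exact toR_eps_mem j.succ
            · simp [Pi.single_apply, hne.symm]
          have h2 : (0 : Fin N → ℝ) ∈ {x ∈ (unitSimplex N).carrier | x i = 0} := by
            constructor
            · simpa using toR_eps_mem (0 : Fin (N+1))
            · simp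
          have := vsub_mem_vectorSpan ℝ h1 h2
          simpa using this
    rw [hvs]
    exact ker_dim _ (fun m => ⟨Pi.single i m, by simp⟩)

def sumFacet (hN : 0 < N) : (unitSimplex N).Facet where
  form := sumForm N
  surj := fun m => ⟨Pi.single ⟨0, hN⟩ (-m), by simp [sumForm, Finset.sum_pi_single]⟩
  b := -1
  min_le := by
    intro x hx
    have := (carrier_subset hx).2
    have h : -∑ j, x j ≥ -1 := by linarith
    simpa [formR_sum] using h
  attained := by
    refine ⟨Pi.single ⟨0, hN⟩ (1:ℝ), ?_, ?_⟩
    · rw [← toR_single]; exact toR_eps_mem (Fin.succ ⟨0, hN⟩)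
    · simp [formR_sum, Finset.sum_pi_single]
  dim := by
    set i₀ : Fin N := ⟨0, hN⟩
    set Lr : (Fin N → ℝ) →ₗ[ℝ] ℝ := -(∑ j, LinearMap.proj (R := ℝ) (φ := fun _ : Fin N => ℝ) j)
      with hLr
    have hLr_apply : ∀ x, Lr x = -∑ j, x j := by
      intro x; simp [hLr]
    have hset : {x ∈ (unitSimplex N).carrier | formR (sumForm N) x = ((-1:ℤ):ℝ)} =
        {x ∈ (unitSimplex N).carrier | Lr x = -1} := by
      ext x; simp [formR_sum, hLr_apply]
    rw [hset]
    have hvs : vectorSpan ℝ {x ∈ (unitSimplex N).carrier | Lr x = -1} =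
        LinearMap.ker Lr := by
      apply le_antisymm
      · rw [vectorSpan_def, Submodule.span_le]
        rintro v ⟨x, hx, y, hy, rfl⟩
        simp only [SetLike.mem_coe, LinearMap.mem_ker]
        have : (x -ᵥ y) = x - y := rfl
        rw [this, map_sub, hx.2, hy.2, sub_self]
      · intro v hv
        simp only [LinearMap.mem_ker] at hv
        rw [hLr_apply, neg_eq_zero] at hv
        have hmem : ∀ j : Fin N, ((Pi.single j 1 : Fin N → ℝ) - Pi.single i₀ 1) ∈
            vectorSpan ℝ {x ∈ (unitSimplex N).carrier | Lr x = -1} := by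
          intro j
          have h1 : (Pi.single j 1 : Fin N → ℝ) ∈
              {x ∈ (unitSimplex N).carrier | Lr x = -1} := by
            constructor
            · rw [← toR_single]; exact toR_eps_mem j.succ
            · rw [hLr_apply]; simp [Finset.sum_pi_single]
          have h2 : (Pi.single i₀ 1 : Fin N → ℝ) ∈
              {x ∈ (unitSimplex N).carrier | Lr x = -1} := by
            constructor
            · rw [← toR_single]; exact toR_eps_mem i₀.succ
            · rw [hLr_apply]; simp [Finset.sum_pi_single]
          have := vsub_mem_vectorSpan ℝ h1 h2
          simpa using this
        have hdecomp : v = ∑ j, v j • ((Pi.single j 1 : Fin N → ℝ) - Pi.single i₀ 1) := by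
          have : ∑ j, v j • ((Pi.single j 1 : Fin N → ℝ) - Pi.single i₀ 1) =
              (∑ j, v j • (Pi.single j 1 : Fin N → ℝ)) -
                (∑ j, v j) • (Pi.single i₀ 1 : Fin N → ℝ) := by
            rw [Finset.sum_smul]
            rw [← Finset.sum_sub_distrib]
            congr 1
            funext j
            rw [smul_sub]
          rw [this, hv, zero_smul, sub_zero, ← pi_decomp]
        rw [hdecomp]
        exact Submodule.sum_mem _ fun j _ => Submodule.smul_mem _ _ (hmem j)
    rw [hvs]
    apply ker_dim
    intro m
    refine ⟨Pi.single i₀ (-m), ?_⟩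
    rw [hLr_apply]
    simp [Finset.sum_pi_single]

def stdFacet (hN : 0 < N) (a : Fin (N+1)) : (unitSimplex N).Facet :=
  Fin.cases (sumFacet hN) coordFacet a

lemma std_facet_mem (hN : 0 < N) (a c : Fin (N+1)) :
    toR (eps c) ∈ (stdFacet hN a).set ↔ c ≠ a := by
  induction a using Fin.cases with
  | zero =>
    simp only [stdFacet, Fin.cases_zero, Facet.set, sumFacet, Set.mem_setOf_eq,
      toR_eps_mem, true_and, formR_sum]
    have : ∑ j, toR (eps c) j = ((∑ j, eps c j : ℤ) : ℝ) := by
      push_cast [toR]; rfl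
    rw [this, eps_sum]
    rcases eq_or_ne c 0 with rfl | hc
    · simp
    · simp [hc]
  | succ i =>
    simp only [stdFacet, Fin.cases_succ, Facet.set, coordFacet, Set.mem_setOf_eq,
      toR_eps_mem, true_and, formR_coord]
    have : toR (eps c) i = ((eps c i : ℤ) : ℝ) := rfl
    rw [this, eps_apply]
    rcases eq_or_ne c i.succ with rfl | hc
    · simp
    · simp [hc]

end SimplexAux
namespace SimplexAux
open LatticePolytope
variable {N : ℕ}

lemma eps_ne (a b : Fin (N+1)) (h : a ≠ b) : eps b - eps a ≠ 0 := by
  intro h0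
  exact h (eps_inj (sub_eq_zero.mp h0)).symm

lemma ite_one_zero (x y : Fin (N+1)) :
    (if x = y then (1:ℤ) else 0) = 0 ∨ (if x = y then (1:ℤ) else 0) = 1 := by
  split <;> simp

lemma pair_inj {a b c d : Fin (N+1)} (hab : a ≠ b) (hcd : c ≠ d)
    (h : eps b - eps a = eps d - eps c) : a = c ∧ b = d := by
  have h' : eps b + eps c = eps d + eps a := sub_eq_sub_iff_add_eq_add.mp h
  induction b using Fin.cases with
  | succ j =>
    have key := congrFun h' j
    simp only [Pi.add_apply, eps_apply] at key
    rw [if_pos trivial, if_neg hab] at key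
    have hbd : d = j.succ := by
      by_contra hdd
      rw [if_neg hdd] at key
      rcases ite_one_zero c j.succ with hh | hh <;> rw [hh] at key <;> omega
    subst hbd
    refine ⟨?_, rfl⟩
    have : eps j.succ - eps a = eps j.succ - eps c := h
    exact eps_inj (sub_right_inj.mp this)
  | zero =>
    induction d using Fin.cases with
    | zero =>
      refine ⟨?_, rfl⟩
      have : eps (0 : Fin (N+1)) - eps a = eps 0 - eps c := h
      exact eps_inj (sub_right_inj.mp this)
    | succ j =>
      exfalso
      have key := congrFun h' j
      simp only [Pi.add_apply, eps_apply] at key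
      rw [if_pos trivial, if_neg hcd] at key
      split_ifs at key with h1 h2 h3
      all_goals try norm_num at key
      all_goals exact absurd h1.symm (Fin.succ_ne_zero j)

lemma col_vec (hN : 0 < N) {a b : Fin (N+1)} (h : a ≠ b) :
    (unitSimplex N).IsBaseFacet (eps b - eps a) (stdFacet hN a) := by
  constructor
  · exact eps_ne a b h
  · intro x hx hxF
    have hx' : x ∈ (unitSimplex N).latticePoints := hx
    rw [lattice_eq] at hx'
    obtain ⟨c, rfl⟩ := hx'
    have hca : c = a := by
      by_contra hc
      exact hxF ((std_facet_mem hN a c).mpr hc)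
    subst hca
    have heq : eps c + (eps b - eps c) = eps b := by abel
    rw [heq]
    exact toR_eps_mem b

lemma sum_toR (z : Fin N → ℤ) : ∑ j, toR z j = ((∑ j, z j : ℤ) : ℝ) := by
  push_cast [toR]; rfl

lemma not_in_carrier {a b c : Fin (N+1)} (hab : a ≠ b) (hca : c ≠ a) :
    toR (eps c + (eps b - eps a)) ∉ (unitSimplex N).carrier := by
  intro hmem
  have hc := carrier_subset hmem
  induction a using Fin.cases with
  | zero =>
    have hs := hc.2
    rw [sum_toR] at hs
    have h2 : ∑ j, (eps c + (eps b - (eps 0 : Fin N → ℤ))) j = (2:ℤ) := by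
      have he : ∀ j : Fin N, (eps c + (eps b - (eps 0 : Fin N → ℤ))) j
          = eps c j + eps b j := by
        intro j; simp
      rw [Finset.sum_congr rfl fun j _ => he j, Finset.sum_add_distrib,
        eps_sum, eps_sum, if_neg hca, if_neg (fun hh => hab hh.symm)]
      norm_num
    rw [h2] at hs
    norm_num at hs
  | succ i =>
    have hnn := hc.1 i
    have hco : (eps c + (eps b - eps i.succ)) i = -1 := by
      simp only [Pi.add_apply, Pi.sub_apply, eps_apply]
      rw [if_neg hca, if_neg (fun hh => hab hh.symm), if_pos trivial]
      norm_num
    have : toR (eps c + (eps b - eps i.succ)) i = ((-1 : ℤ) : ℝ) := by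
      rw [← hco]; rfl
    rw [this] at hnn
    norm_num at hnn

lemma base_char {a b : Fin (N+1)} {F : (unitSimplex N).Facet} (hab : a ≠ b)
    (hF : (unitSimplex N).IsBaseFacet (eps b - eps a) F) :
    ∀ c, c ≠ a → toR (eps c) ∈ F.set := by
  intro c hc
  by_contra hns
  exact not_in_carrier hab hc (hF.2 (eps c) (toR_eps_mem c) hns)

lemma facet_not_all (F : (unitSimplex N).Facet) : ∃ c, toR (eps c) ∉ F.set := by
  by_contra hall
  push_neg at hall
  have h0 := (hall 0).2
  simp only [eps_zero, toR_zero] at h0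
  have hb : (F.b : ℝ) = 0 := by
    rw [← h0]; simp [LatticePolytope.formR]
  have hcoef : ∀ i : Fin N, (F.form (Pi.single i 1) : ℝ) = 0 := by
    intro i
    have hi := (hall i.succ).2
    simp only [eps_succ] at hi
    rw [toR_single, hb] at hi
    have hfr : formR F.form (Pi.single i (1:ℝ)) = (F.form (Pi.single i 1) : ℝ) := by
      simp [LatticePolytope.formR, Pi.single_apply]
    rw [hfr] at hi
    exact hi
  have hform : ∀ z : Fin N → ℤ, F.form z = 0 := by
    intro z
    have hz : z = ∑ i, z i • (Pi.single i 1 : Fin N → ℤ) := by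
      funext k
      rw [Finset.sum_apply]
      simp [Pi.single_apply]
    rw [hz, map_sum]
    apply Finset.sum_eq_zero
    intro i _
    have h1 : F.form (z i • (Pi.single i 1 : Fin N → ℤ)) = z i • F.form (Pi.single i 1) :=
      AddMonoidHom.map_zsmul _ _ _
    have h2 : F.form (Pi.single i 1) = 0 := by exact_mod_cast hcoef i
    rw [h1, h2, smul_zero]
  obtain ⟨x, hx⟩ := F.surj 1
  rw [hform x] at hx
  exact one_ne_zero hx.symm

lemma base_char' {a b : Fin (N+1)} {F : (unitSimplex N).Facet} (hab : a ≠ b)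
    (hF : (unitSimplex N).IsBaseFacet (eps b - eps a) F) :
    toR (eps a) ∉ F.set := by
  obtain ⟨c, hc⟩ := facet_not_all F
  rcases eq_or_ne c a with rfl | hca
  · exact hc
  · exact absurd (base_char hab hF c hca) hc

lemma prodEx_of (hN : 0 < N) {a b d : Fin (N+1)} (hab : a ≠ b) (hbd : b ≠ d)
    (had : a ≠ d) :
    (unitSimplex N).ProdEx (eps b - eps a) (eps d - eps b) := by
  refine ⟨⟨_, col_vec hN hab⟩, ⟨_, col_vec hN hbd⟩, ?_, ?_⟩
  · have heq : eps b - eps a + (eps d - eps b) = eps d - eps a := by abel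
    rw [heq]
    exact eps_ne a d had
  · intro Fu Fv hFu hFv x hx hxF
    have hx' : x ∈ (unitSimplex N).latticePoints := hx
    rw [lattice_eq] at hx'
    obtain ⟨c, rfl⟩ := hx'
    have hca : c = a := by
      by_contra hc
      exact hxF (base_char hab hFu c hc)
    subst hca
    have heq : eps c + (eps b - eps c) = eps b := by abel
    rw [heq]
    exact base_char' hbd hFv

lemma prodEx_to {a b c d : Fin (N+1)} (hN : 0 < N) (hab : a ≠ b) (hcd : c ≠ d)
    (h : (unitSimplex N).ProdEx (eps b - eps a) (eps d - eps c)) :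
    b = c ∧ a ≠ d := by
  have hb : b = c := by
    have hstep := h.2.2.2 (stdFacet hN a) (stdFacet hN c) (col_vec hN hab) (col_vec hN hcd)
      (eps a) (toR_eps_mem a)
      (fun hmem => ((std_facet_mem hN a a).mp hmem) rfl)
    have heq : eps a + (eps b - eps a) = eps b := by abel
    rw [heq] at hstep
    by_contra hbc
    exact hstep ((std_facet_mem hN c b).mpr hbc)
  subst hb
  refine ⟨rfl, ?_⟩
  intro had
  subst had
  apply h.2.2.1
  abel

end SimplexAux
namespace ChainAux
open LatticePolytope

variable {n : ℕ} {P : LatticePolytope n}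

/-- consecutive products exist -/
def Consec (P : LatticePolytope n) (L : List (Fin n → ℤ)) : Prop :=
  ∀ i : ℕ, ∀ h : i + 1 < L.length, P.ProdEx (L[i]'(Nat.lt_of_succ_lt h)) (L[i+1]'h)

lemma strongProd_iff (L : List (Fin n → ℤ)) :
    P.StrongProd L ↔ L ≠ [] ∧ (∀ x ∈ L, P.IsColVec x) ∧ Consec P L ∧
      (∀ r s : ℕ, r < s → s < L.length → ((L.drop r).take (s + 1 - r)).sum ≠ 0) := by
  unfold StrongProd Consec
  simp only [List.get_eq_getElem]

lemma consec_tail {x : Fin n → ℤ} {L : List (Fin n → ℤ)}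
    (h : Consec P (x :: L)) : Consec P L := by
  intro i hi
  have := h (i+1) (by simpa using Nat.succ_lt_succ hi)
  simpa using this

lemma consec_infix {L : List (Fin n → ℤ)} (h : Consec P L) (r k : ℕ) :
    Consec P ((L.drop r).take k) := by
  intro i hi
  have hlen : ((L.drop r).take k).length = min k (L.length - r) := by
    rw [List.length_take, List.length_drop]
  rw [hlen] at hi
  have hb : r + i + 1 + 1 ≤ L.length := by omega
  have e1 : ((L.drop r).take k)[i]'(Nat.lt_of_succ_lt (by rw [hlen]; exact hi)) =
      L[r+i]'(by omega) := by
    rw [List.getElem_take, List.getElem_drop]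
  have e2 : ((L.drop r).take k)[i+1]'(by rw [hlen]; exact hi) =
      L[r+(i+1)]'(by omega) := by
    rw [List.getElem_take, List.getElem_drop]
  rw [e1, e2]
  have := h (r+i) (by omega)
  convert this using 2 <;> omega

lemma consec_append {L₁ L₂ : List (Fin n → ℤ)} (h₁ : Consec P L₁) (h₂ : Consec P L₂)
    (hb : ∀ (hn₁ : L₁ ≠ []) (hn₂ : L₂ ≠ []),
      P.ProdEx (L₁.getLast hn₁) (L₂.head hn₂)) :
    Consec P (L₁ ++ L₂) := by
  intro i hi
  rw [List.length_append] at hi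
  rcases lt_trichotomy (i+1) L₁.length with hlt | heq | hgt
  · have e1 : (L₁ ++ L₂)[i]'(by rw [List.length_append]; omega) =
        L₁[i]'(by omega) := List.getElem_append_left (by omega)
    have e2 : (L₁ ++ L₂)[i+1]'(by rw [List.length_append]; omega) =
        L₁[i+1]'hlt := List.getElem_append_left (by omega)
    rw [e1, e2]
    exact h₁ i hlt
  · have hi1 : i < L₁.length := by omega
    have hn₁ : L₁ ≠ [] := by
      intro h0; rw [h0] at hi1; simp at hi1
    have hn₂ : L₂ ≠ [] := by
      intro h0; rw [h0] at hi; simp at hi; omega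
    have e1 : (L₁ ++ L₂)[i]'(by rw [List.length_append]; omega) =
        L₁[i]'hi1 := List.getElem_append_left (by omega)
    have e2 : (L₁ ++ L₂)[i+1]'(by rw [List.length_append]; omega) =
        L₂[(i+1) - L₁.length]'(by omega) := List.getElem_append_right (by omega)
    have e3 : L₁[i]'hi1 = L₁.getLast hn₁ := by
      rw [List.getLast_eq_getElem]
      congr 1
      omega
    have e4 : L₂[(i+1) - L₁.length]'(by omega) = L₂.head hn₂ := by
      rw [List.head_eq_getElem]
      congr 1
      omega
    rw [e1, e2, e3, e4]
    exact hb hn₁ hn₂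
  · have hle : L₁.length ≤ i := by omega
    have e1 : (L₁ ++ L₂)[i]'(by rw [List.length_append]; omega) =
        L₂[i - L₁.length]'(by omega) := List.getElem_append_right hle
    have e2 : (L₁ ++ L₂)[i+1]'(by rw [List.length_append]; omega) =
        L₂[(i+1) - L₁.length]'(by omega) := List.getElem_append_right (by omega)
    rw [e1, e2]
    have := h₂ (i - L₁.length) (by omega)
    convert this using 2
    omega

/-- a strongly existing product of column vectors is a column vector -/
lemma sum_col {L : List (Fin n → ℤ)} (hne : L ≠ [])
    (hcv : ∀ x ∈ L, P.IsColVec x) (hcons : Consec P L) (hnz : L.sum ≠ 0) :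
    P.IsColVec L.sum := by
  have h0 : 0 < L.length := List.length_pos_iff.mpr hne
  obtain ⟨F₀, hF₀⟩ := hcv (L[0]'h0) (List.getElem_mem _)
  refine ⟨F₀, hnz, ?_⟩
  intro x hx hxF
  have inv : ∀ m, m ≤ L.length → toR (x + (L.take m).sum) ∈ P.carrier ∧
      (∀ hm : m < L.length, ∃ F, P.IsBaseFacet (L[m]'hm) F ∧
        toR (x + (L.take m).sum) ∉ F.set) := by
    intro m
    induction m with
    | zero =>
      intro _
      constructor
      · simpa using hx
      · intro h0'
        exact ⟨F₀, hF₀, by simpa using hxF⟩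
    | succ m ih =>
      intro hm1
      have hm : m < L.length := by omega
      obtain ⟨hc, hF⟩ := ih (le_of_lt hm)
      obtain ⟨F, hbF, hnF⟩ := hF hm
      have hsum : (L.take (m+1)).sum = (L.take m).sum + L[m]'hm :=
        List.sum_take_succ _ _ hm
      constructor
      · rw [hsum, ← add_assoc]
        exact hbF.2 _ hc hnF
      · intro hm2
        have hpe := hcons m hm2
        obtain ⟨F', hbF'⟩ := hcv (L[m+1]'hm2) (List.getElem_mem _)
        refine ⟨F', hbF', ?_⟩
        rw [hsum, ← add_assoc]
        exact hpe.2.2.2 F F' hbF hbF' _ hc hnF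
  have := (inv L.length (le_refl _)).1
  rwa [List.take_length] at this

lemma col_ne_zero {v : Fin n → ℤ} (h : P.IsColVec v) : v ≠ 0 := by
  obtain ⟨F, hF⟩ := h
  exact hF.1

lemma strong_sum_ne_zero {L : List (Fin n → ℤ)} (hne : L ≠ [])
    (hcv : ∀ x ∈ L, P.IsColVec x)
    (hnz : ∀ r s : ℕ, r < s → s < L.length → ((L.drop r).take (s + 1 - r)).sum ≠ 0) :
    L.sum ≠ 0 := by
  rcases L with _ | ⟨x, L'⟩
  · exact absurd rfl hne
  · rcases L' with _ | ⟨y, L''⟩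
    · have := col_ne_zero (hcv x (by simp))
      simpa using this
    · set L := x :: y :: L'' with hL
      have hlen : 2 ≤ L.length := by simp [hL]
      have h2 := hnz 0 (L.length - 1) (by omega) (by omega)
      have e : L.length - 1 + 1 - 0 = L.length := by omega
      rw [e, List.drop_zero, List.take_length] at h2
      exact h2

lemma strong_sum_col {L : List (Fin n → ℤ)} (h : P.StrongProd L) :
    P.IsColVec L.sum := by
  rw [strongProd_iff] at h
  obtain ⟨hne, hcv, hcons, hnz⟩ := h
  exact sum_col hne hcv hcons (strong_sum_ne_zero hne hcv hnz)

lemma bra_subset_col {V : Set (Fin n → ℤ)} : P.bra V ⊆ P.Col := by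
  rintro w ⟨L, hLV, hLs, rfl⟩
  exact strong_sum_col hLs

lemma zero_not_bra {V : Set (Fin n → ℤ)} : (0 : Fin n → ℤ) ∉ P.bra V := by
  intro h
  exact col_ne_zero (bra_subset_col h) rfl

end ChainAux
namespace ChainAux
open LatticePolytope

section SupportsSec

variable {n k : ℕ} {P : LatticePolytope n} {V : Set (Fin n → ℤ)}
  {E : Fin k → Fin k → Prop}
  (g : {w // w ∈ P.bra V} → {p : Fin k × Fin k // Relation.TransGen E p.1 p.2})
  (hiff : ∀ u v : {w // w ∈ P.bra V}, P.ProdEx u.1 v.1 ↔ (g u).1.2 = (g v).1.1)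
  (hmul : ∀ u v : {w // w ∈ P.bra V}, ∀ h : u.1 + v.1 ∈ P.bra V,
    P.ProdEx u.1 v.1 → (g ⟨u.1 + v.1, h⟩).1 = ((g u).1.1, (g v).1.2))
  (hbk : P.bra V = P.ket V)

include hbk in
lemma prodex_mem {u v : Fin n → ℤ} (hu : u ∈ P.bra V) (hv : v ∈ P.bra V)
    (hpe : P.ProdEx u v) : u + v ∈ P.bra V := by
  rw [hbk] at hu hv ⊢
  obtain ⟨L₁, hm₁, hw₁, hs₁⟩ := hu
  obtain ⟨L₂, hm₂, hw₂, hs₂⟩ := hv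
  refine ⟨L₁ ++ L₂, ?_, ?_, ?_⟩
  · intro x hx
    rcases List.mem_append.mp hx with h | h
    exacts [hm₁ x h, hm₂ x h]
  · exact WeakProd.mul L₁ L₂ hw₁ hw₂ (by rw [hs₁, hs₂]; exact hpe)
  · rw [List.sum_append, hs₁, hs₂]

include hiff hmul hbk in
lemma chain_sum : ∀ L : List (Fin n → ℤ), ∀ hne : L ≠ [],
    (∀ x ∈ L, x ∈ P.bra V) → Consec P L →
    ∃ h : L.sum ∈ P.bra V, ∀ (hh : L.head hne ∈ P.bra V)
      (hl : L.getLast hne ∈ P.bra V),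
      (g ⟨L.sum, h⟩).1 = ((g ⟨L.head hne, hh⟩).1.1, (g ⟨L.getLast hne, hl⟩).1.2) := by
  intro L
  induction L with
  | nil => intro hne; exact absurd rfl hne
  | cons x T ih =>
    intro hne hm hc
    rcases eq_or_ne T [] with rfl | hTne
    · have hx : x ∈ P.bra V := hm x (by simp)
      have hxs : ([x]).sum ∈ P.bra V := by simpa using hx
      refine ⟨hxs, ?_⟩
      intro hh hl
      have hv : (⟨([x]).sum, hxs⟩ : {w // w ∈ P.bra V}) = ⟨x, hx⟩ :=
        Subtype.ext (by simp)
      rw [hv]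
      exact (Prod.mk.eta).symm
    · obtain ⟨hT, hpair⟩ := ih hTne (fun y hy => hm y (List.mem_cons_of_mem _ hy))
        (consec_tail hc)
      have hx : x ∈ P.bra V := hm x (by simp)
      have hTh : T.head hTne ∈ P.bra V := hm _ (List.mem_cons_of_mem _ (List.head_mem hTne))
      have hTl : T.getLast hTne ∈ P.bra V := hm _ (List.mem_cons_of_mem _ (List.getLast_mem hTne))
      have hc0 : P.ProdEx x (T.head hTne) := by
        have h1 := hc 0 (by simp [List.length_cons]; exact List.length_pos_iff.mpr hTne)
        have e0 : (x :: T)[0] = x := rfl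
        have e1 : (x :: T)[1]'(by simp [List.length_cons]; exact List.length_pos_iff.mpr hTne)
            = T.head hTne := by
          rw [List.getElem_cons_succ, ← List.head_eq_getElem]
        rwa [e0, e1] at h1
      have hmatch : (g ⟨x, hx⟩).1.2 = (g ⟨T.sum, hT⟩).1.1 := by
        rw [hpair hTh hTl]
        exact (hiff ⟨x, hx⟩ ⟨T.head hTne, hTh⟩).mp hc0
      have hpe : P.ProdEx x T.sum := (hiff ⟨x, hx⟩ ⟨T.sum, hT⟩).mpr hmatch
      have hmem : x + T.sum ∈ P.bra V := prodex_mem hbk hx hT hpe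
      have hsum : (x :: T).sum = x + T.sum := List.sum_cons
      refine ⟨by rw [hsum]; exact hmem, ?_⟩
      intro hh hl
      have hmm := hmul ⟨x, hx⟩ ⟨T.sum, hT⟩ hmem hpe
      have e2 : (⟨(x :: T).sum, by rw [hsum]; exact hmem⟩ : {w // w ∈ P.bra V})
          = ⟨x + T.sum, hmem⟩ := Subtype.ext hsum
      have e4 : (x :: T).getLast hne = T.getLast hTne := List.getLast_cons hTne
      have hvl : (⟨(x :: T).getLast hne, hl⟩ : {w // w ∈ P.bra V})
          = ⟨T.getLast hTne, hTl⟩ := Subtype.ext e4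
      rw [e2, hmm, hvl, hpair hTh hTl]
      rfl

include hiff hmul hbk in
lemma strong_of_chain {L : List (Fin n → ℤ)} (hne : L ≠ [])
    (hm : ∀ x ∈ L, x ∈ P.bra V) (hc : Consec P L) : P.StrongProd L := by
  rw [strongProd_iff]
  refine ⟨hne, fun x hx => bra_subset_col (hm x hx), hc, ?_⟩
  intro r s hrs hs
  set M := (L.drop r).take (s + 1 - r) with hM
  have hMlen : M.length = min (s + 1 - r) (L.length - r) := by
    rw [hM, List.length_take, List.length_drop]
  have hMne : M ≠ [] := by
    apply List.length_pos_iff.mp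
    rw [hMlen]
    omega
  have hmM : ∀ x ∈ M, x ∈ P.bra V := by
    intro x hx
    exact hm x (List.drop_subset _ _ (List.take_subset _ _ hx))
  obtain ⟨hMs, -⟩ := chain_sum g hiff hmul hbk M hMne hmM (consec_infix hc r _)
  intro h0
  rw [h0] at hMs
  exact zero_not_bra hMs

include hiff hmul hbk in
lemma strong_to_weak : ∀ {L : List (Fin n → ℤ)}, L ≠ [] →
    (∀ x ∈ L, x ∈ P.bra V) → Consec P L → P.WeakProd L := by
  intro L
  induction L with
  | nil => intro hne; exact absurd rfl hne
  | cons x T ih =>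
    intro hne hm hc
    rcases eq_or_ne T [] with rfl | hTne
    · exact WeakProd.single x (bra_subset_col (hm x (by simp)))
    · have hx : x ∈ P.bra V := hm x (by simp)
      have hmT : ∀ y ∈ T, y ∈ P.bra V := fun y hy => hm y (List.mem_cons_of_mem _ hy)
      have hwT : P.WeakProd T := ih hTne hmT (consec_tail hc)
      obtain ⟨hT, hpair⟩ := chain_sum g hiff hmul hbk T hTne hmT (consec_tail hc)
      have hTh : T.head hTne ∈ P.bra V := hmT _ (List.head_mem hTne)
      have hTl : T.getLast hTne ∈ P.bra V := hmT _ (List.getLast_mem hTne)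
      have hc0 : P.ProdEx x (T.head hTne) := by
        have h1 := hc 0 (by simp [List.length_cons]; exact List.length_pos_iff.mpr hTne)
        have e1 : (x :: T)[1]'(by simp [List.length_cons]; exact List.length_pos_iff.mpr hTne)
            = T.head hTne := by
          rw [List.getElem_cons_succ, ← List.head_eq_getElem]
        rwa [e1] at h1
      have hpe : P.ProdEx x T.sum := by
        refine (hiff ⟨x, hx⟩ ⟨T.sum, hT⟩).mpr ?_
        rw [hpair hTh hTl]
        exact (hiff ⟨x, hx⟩ ⟨T.head hTne, hTh⟩).mp hc0
      have := WeakProd.mul [x] T (WeakProd.single x (bra_subset_col hx)) hwT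
        (by simpa using hpe)
      simpa using this

lemma weak_ne_nil {L : List (Fin n → ℤ)} (h : P.WeakProd L) : L ≠ [] := by
  induction h with
  | single v hv => simp
  | mul L₁ L₂ h₁ h₂ hpe ih₁ ih₂ => simp [ih₁]

include hiff hmul hbk in
lemma weak_consec {L : List (Fin n → ℤ)} (h : P.WeakProd L) :
    (∀ x ∈ L, x ∈ P.bra V) → Consec P L := by
  induction h with
  | single v hv =>
    intro _ i hi
    simp at hi
  | mul L₁ L₂ h₁ h₂ hpe ih₁ ih₂ =>
    intro hm
    have hm₁ : ∀ x ∈ L₁, x ∈ P.bra V := fun x hx => hm x (List.mem_append_left _ hx)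
    have hm₂ : ∀ x ∈ L₂, x ∈ P.bra V := fun x hx => hm x (List.mem_append_right _ hx)
    apply consec_append (ih₁ hm₁) (ih₂ hm₂)
    intro hn₁ hn₂
    obtain ⟨hs₁, hp₁⟩ := chain_sum g hiff hmul hbk L₁ hn₁ hm₁ (ih₁ hm₁)
    obtain ⟨hs₂, hp₂⟩ := chain_sum g hiff hmul hbk L₂ hn₂ hm₂ (ih₂ hm₂)
    have h₁h : L₁.head hn₁ ∈ P.bra V := hm₁ _ (List.head_mem hn₁)
    have h₁l : L₁.getLast hn₁ ∈ P.bra V := hm₁ _ (List.getLast_mem hn₁)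
    have h₂h : L₂.head hn₂ ∈ P.bra V := hm₂ _ (List.head_mem hn₂)
    have h₂l : L₂.getLast hn₂ ∈ P.bra V := hm₂ _ (List.getLast_mem hn₂)
    refine (hiff ⟨L₁.getLast hn₁, h₁l⟩ ⟨L₂.head hn₂, h₂h⟩).mpr ?_
    have hmm := (hiff ⟨L₁.sum, hs₁⟩ ⟨L₂.sum, hs₂⟩).mp hpe
    rw [hp₁ h₁h h₁l, hp₂ h₂h h₂l] at hmm
    exact hmm

include hiff hmul hbk in
lemma bra_sub {U : Set (Fin n → ℤ)} (hU : U ⊆ P.bra V) : P.bra U ⊆ P.bra V := by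
  rintro w ⟨L, hLU, hLs, rfl⟩
  rw [strongProd_iff] at hLs
  obtain ⟨hne, -, hc, -⟩ := hLs
  exact (chain_sum g hiff hmul hbk L hne (fun x hx => hU (hLU x hx)) hc).choose

include hiff hmul hbk in
lemma braU_eq_ketU {U : Set (Fin n → ℤ)} (hU : U ⊆ P.bra V) :
    P.bra U = P.ket U := by
  ext w
  constructor
  · rintro ⟨L, hLU, hLs, rfl⟩
    rw [strongProd_iff] at hLs
    obtain ⟨hne, -, hc, -⟩ := hLs
    exact ⟨L, hLU, strong_to_weak g hiff hmul hbk hne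
      (fun x hx => hU (hLU x hx)) hc, rfl⟩
  · rintro ⟨L, hLU, hLw, rfl⟩
    have hmV : ∀ x ∈ L, x ∈ P.bra V := fun x hx => hU (hLU x hx)
    exact ⟨L, hLU, strong_of_chain g hiff hmul hbk (weak_ne_nil hLw) hmV
      (weak_consec g hiff hmul hbk hLw hmV), rfl⟩

include hiff hmul hbk in
lemma braU_mul {U : Set (Fin n → ℤ)} (hU : U ⊆ P.bra V) {u v : Fin n → ℤ}
    (hu : u ∈ P.bra U) (hv : v ∈ P.bra U) (hpe : P.ProdEx u v) :
    u + v ∈ P.bra U := by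
  obtain ⟨L₁, hm₁, hst₁, hs₁⟩ := hu
  obtain ⟨L₂, hm₂, hst₂, hs₂⟩ := hv
  rw [strongProd_iff] at hst₁ hst₂
  obtain ⟨hn₁, -, hc₁, -⟩ := hst₁
  obtain ⟨hn₂, -, hc₂, -⟩ := hst₂
  have hmV₁ : ∀ x ∈ L₁, x ∈ P.bra V := fun x hx => hU (hm₁ x hx)
  have hmV₂ : ∀ x ∈ L₂, x ∈ P.bra V := fun x hx => hU (hm₂ x hx)
  obtain ⟨hsV₁, hp₁⟩ := chain_sum g hiff hmul hbk L₁ hn₁ hmV₁ hc₁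
  obtain ⟨hsV₂, hp₂⟩ := chain_sum g hiff hmul hbk L₂ hn₂ hmV₂ hc₂
  have hcapp : Consec P (L₁ ++ L₂) := by
    apply consec_append hc₁ hc₂
    intro hn₁' hn₂'
    have h₁h : L₁.head hn₁ ∈ P.bra V := hmV₁ _ (List.head_mem hn₁)
    have h₁l : L₁.getLast hn₁ ∈ P.bra V := hmV₁ _ (List.getLast_mem hn₁)
    have h₂h : L₂.head hn₂ ∈ P.bra V := hmV₂ _ (List.head_mem hn₂)
    have h₂l : L₂.getLast hn₂ ∈ P.bra V := hmV₂ _ (List.getLast_mem hn₂)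
    refine (hiff ⟨L₁.getLast hn₁', h₁l⟩ ⟨L₂.head hn₂', h₂h⟩).mpr ?_
    have hpe' : P.ProdEx L₁.sum L₂.sum := by rw [hs₁, hs₂]; exact hpe
    have hmm := (hiff ⟨L₁.sum, hsV₁⟩ ⟨L₂.sum, hsV₂⟩).mp hpe'
    rw [hp₁ h₁h h₁l, hp₂ h₂h h₂l] at hmm
    exact hmm
  refine ⟨L₁ ++ L₂, ?_, ?_, ?_⟩
  · intro x hx
    rcases List.mem_append.mp hx with h | h
    exacts [hm₁ x h, hm₂ x h]
  · apply strong_of_chain g hiff hmul hbk (by simp [hn₁]) ?_ hcapp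
    intro x hx
    rcases List.mem_append.mp hx with h | h
    exacts [hmV₁ x h, hmV₂ x h]
  · rw [List.sum_append, hs₁, hs₂]

end SupportsSec
end ChainAux
namespace GraphAux
open Relation

lemma good_acyclic {k : ℕ} {E : Fin k → Fin k → Prop} (hg : GoodGraph k E) :
    ∀ a, ¬ TransGen E a a := by
  intro a h
  have h' := h
  cases h with
  | single h1 => exact hg.no_loop a h1
  | tail h1 h2 =>
    exact hg.unique_path _ _ h2 ⟨a, TransGen.single h2, h'⟩

variable {α : Type*} [Fintype α] {E : α → α → Prop}

/-- height of a vertex : number of vertices strictly below it -/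
noncomputable def ht (E : α → α → Prop) (a : α) : ℕ := {x | TransGen E x a}.ncard

lemma height_lt (hacyc : ∀ a, ¬ TransGen E a a) {a b : α} (h : TransGen E a b) :
    ht E a < ht E b := by
  apply Set.ncard_lt_ncard _ (Set.toFinite _)
  constructor
  · intro x hx
    exact TransGen.trans hx h
  · intro hsub
    exact hacyc a (hsub h)

/-- decomposition of a transitive acyclic relation into irreducibles -/
lemma decompose (hacyc : ∀ a, ¬ TransGen E a a) (S : α → α → Prop)
    (hsub : ∀ {a b}, S a b → TransGen E a b) :
    ∀ a b, S a b →
      TransGen (fun a b => S a b ∧ ¬ ∃ c, S a c ∧ S c b) a b := by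
  suffices h : ∀ m a b, ht E b - ht E a ≤ m → S a b →
      TransGen (fun a b => S a b ∧ ¬ ∃ c, S a c ∧ S c b) a b by
    intro a b hS
    exact h _ a b le_rfl hS
  intro m
  induction m with
  | zero =>
    intro a b h0 hS
    have := height_lt hacyc (hsub hS)
    omega
  | succ m ih =>
    intro a b hle hS
    by_cases hirr : ∃ c, S a c ∧ S c b
    · obtain ⟨c, h1, h2⟩ := hirr
      have hac := height_lt hacyc (hsub h1)
      have hcb := height_lt hacyc (hsub h2)
      exact (ih a c (by omega) h1).trans (ih c b (by omega) h2)
    · exact TransGen.single ⟨hS, hirr⟩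

lemma transGen_to_subtype {E' : α → α → Prop} {Vs : Set α}
    (hm : ∀ {a b}, E' a b → a ∈ Vs ∧ b ∈ Vs) {a b} (h : TransGen E' a b) :
    ∀ (ha : a ∈ Vs) (hb : b ∈ Vs),
      TransGen (fun p q : Vs => E' p.1 q.1) ⟨a, ha⟩ ⟨b, hb⟩ := by
  induction h with
  | single h1 =>
    intro ha hb
    exact TransGen.single h1
  | tail h1 h2 ih =>
    intro ha hb
    exact TransGen.tail (ih ha (hm h2).1) h2

lemma transGen_of_subtype {E' : α → α → Prop} {Vs : Set α} {p q : Vs}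
    (h : TransGen (fun p q : Vs => E' p.1 q.1) p q) : TransGen E' p.1 q.1 :=
  TransGen.lift Subtype.val (fun _ _ hh => hh) _ _ h

end GraphAux
namespace SimplexAux
open LatticePolytope ChainAux Relation

variable {N : ℕ} {E : Fin (N+1) → Fin (N+1) → Prop}

/-- elements are reachable-pair vectors -/
def TPair (E : Fin (N+1) → Fin (N+1) → Prop) (x : Fin N → ℤ) : Prop :=
  ∃ a b, TransGen E a b ∧ x = eps b - eps a

lemma tpair_ne (hacyc : ∀ a, ¬ TransGen E a a) {a b : Fin (N+1)}
    (h : TransGen E a b) : a ≠ b := by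
  intro hab
  subst hab
  exact hacyc a h

lemma getElem_head {L : List (Fin N → ℤ)} (hne : L ≠ [])
    (h0 : 0 < L.length) : L[0]'h0 = L.head hne := (List.head_eq_getElem _).symm

lemma cons_getElem_one {x : Fin N → ℤ} {T : List (Fin N → ℤ)} (hTne : T ≠ [])
    (h1 : 1 < (x :: T).length) : (x :: T)[1]'h1 = T.head hTne := by
  rw [List.getElem_cons_succ, ← List.head_eq_getElem]

lemma chainT (hN : 0 < N) (hacyc : ∀ a, ¬ TransGen E a a) :
    ∀ L : List (Fin N → ℤ), ∀ hne : L ≠ [],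
    (∀ x ∈ L, TPair E x) → Consec (unitSimplex N) L →
    ∃ a b, TransGen E a b ∧ L.sum = eps b - eps a ∧
      (∃ c, TransGen E a c ∧ L.head hne = eps c - eps a) ∧
      (∃ c', TransGen E c' b ∧ L.getLast hne = eps b - eps c') := by
  intro L
  induction L with
  | nil => intro hne; exact absurd rfl hne
  | cons x T ih =>
    intro hne hm hc
    obtain ⟨a₀, b₀, h₀, hx⟩ := hm x (by simp)
    rcases eq_or_ne T [] with rfl | hTne
    · refine ⟨a₀, b₀, h₀, by simpa using hx, ⟨b₀, h₀, by simpa using hx⟩,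
        ⟨a₀, h₀, by simpa using hx⟩⟩
    · obtain ⟨a, b, hab, hsum, ⟨c, hac, hhead⟩, ⟨c', hc'b, hlast⟩⟩ :=
        ih hTne (fun y hy => hm y (List.mem_cons_of_mem _ hy)) (consec_tail hc)
      have h1pos : 1 < (x :: T).length := by
        simp [List.length_cons]
        exact List.length_pos_iff.mpr hTne
      have hpe0 : (unitSimplex N).ProdEx x (T.head hTne) := by
        have h1 := hc 0 h1pos
        rwa [show (x :: T)[0] = x from rfl, cons_getElem_one hTne] at h1
      have hb₀a : b₀ = a := by
        rw [hx, hhead] at hpe0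
        exact (prodEx_to hN (tpair_ne hacyc h₀) (tpair_ne hacyc hac) hpe0).1
      subst hb₀a
      have hsum' : (x :: T).sum = eps b - eps a₀ := by
        rw [List.sum_cons, hsum, hx]
        abel
      refine ⟨a₀, b, h₀.trans hab, hsum', ⟨b₀, h₀, by simpa using hx⟩, ?_⟩
      refine ⟨c', hc'b, ?_⟩
      rw [List.getLast_cons hTne]
      exact hlast

lemma strong_of_chainT (hN : 0 < N) (hacyc : ∀ a, ¬ TransGen E a a)
    {L : List (Fin N → ℤ)} (hne : L ≠ [])
    (hm : ∀ x ∈ L, TPair E x) (hc : Consec (unitSimplex N) L) :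
    (unitSimplex N).StrongProd L := by
  rw [strongProd_iff]
  refine ⟨hne, ?_, hc, ?_⟩
  · intro x hx
    obtain ⟨a, b, hab, rfl⟩ := hm x hx
    exact ⟨_, col_vec hN (tpair_ne hacyc hab)⟩
  · intro r s hrs hs
    set M := (L.drop r).take (s + 1 - r) with hM
    have hMlen : M.length = min (s + 1 - r) (L.length - r) := by
      rw [hM, List.length_take, List.length_drop]
    have hMne : M ≠ [] := by
      apply List.length_pos_iff.mp
      rw [hMlen]
      omega
    have hmM : ∀ x ∈ M, TPair E x := by
      intro x hx
      exact hm x (List.drop_subset _ _ (List.take_subset _ _ hx))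
    obtain ⟨a, b, hab, hsum, -⟩ := chainT hN hacyc M hMne hmM (consec_infix hc r _)
    rw [hsum]
    exact eps_ne _ _ (tpair_ne hacyc hab)

lemma weak_of_chainT (hN : 0 < N) (hacyc : ∀ a, ¬ TransGen E a a) :
    ∀ {L : List (Fin N → ℤ)}, L ≠ [] → (∀ x ∈ L, TPair E x) →
    Consec (unitSimplex N) L → (unitSimplex N).WeakProd L := by
  intro L
  induction L with
  | nil => intro hne; exact absurd rfl hne
  | cons x T ih =>
    intro hne hm hc
    obtain ⟨a₀, b₀, h₀, hx⟩ := hm x (by simp)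
    have hxcol : (unitSimplex N).IsColVec x := by
      rw [hx]; exact ⟨_, col_vec hN (tpair_ne hacyc h₀)⟩
    rcases eq_or_ne T [] with rfl | hTne
    · exact WeakProd.single x hxcol
    · have hmT : ∀ y ∈ T, TPair E y := fun y hy => hm y (List.mem_cons_of_mem _ hy)
      have hwT := ih hTne hmT (consec_tail hc)
      obtain ⟨a, b, hab, hsum, ⟨c, hac, hhead⟩, -⟩ :=
        chainT hN hacyc T hTne hmT (consec_tail hc)
      have h1pos : 1 < (x :: T).length := by
        simp [List.length_cons]
        exact List.length_pos_iff.mpr hTne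
      have hpe0 : (unitSimplex N).ProdEx x (T.head hTne) := by
        have h1 := hc 0 h1pos
        rwa [show (x :: T)[0] = x from rfl, cons_getElem_one hTne] at h1
      have hb₀a : b₀ = a := by
        rw [hx, hhead] at hpe0
        exact (prodEx_to hN (tpair_ne hacyc h₀) (tpair_ne hacyc hac) hpe0).1
      subst hb₀a
      have hpe : (unitSimplex N).ProdEx x T.sum := by
        rw [hx, hsum]
        exact prodEx_of hN (tpair_ne hacyc h₀) (tpair_ne hacyc hab)
          (tpair_ne hacyc (h₀.trans hab))
      have := WeakProd.mul [x] T (WeakProd.single x hxcol) hwT (by simpa using hpe)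
      simpa using this

lemma weak_consecT (hN : 0 < N) (hacyc : ∀ a, ¬ TransGen E a a)
    {L : List (Fin N → ℤ)} (h : (unitSimplex N).WeakProd L) :
    (∀ x ∈ L, TPair E x) → Consec (unitSimplex N) L := by
  induction h with
  | single v hv =>
    intro _ i hi
    simp at hi
  | mul L₁ L₂ h₁ h₂ hpe ih₁ ih₂ =>
    intro hm
    have hm₁ : ∀ x ∈ L₁, TPair E x := fun x hx => hm x (List.mem_append_left _ hx)
    have hm₂ : ∀ x ∈ L₂, TPair E x := fun x hx => hm x (List.mem_append_right _ hx)
    apply consec_append (ih₁ hm₁) (ih₂ hm₂)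
    intro hn₁ hn₂
    obtain ⟨a₁, b₁, hab₁, hsum₁, -, ⟨c₁, hc₁, hlast₁⟩⟩ :=
      chainT hN hacyc L₁ hn₁ hm₁ (ih₁ hm₁)
    obtain ⟨a₂, b₂, hab₂, hsum₂, ⟨c₂, hc₂, hhead₂⟩, -⟩ :=
      chainT hN hacyc L₂ hn₂ hm₂ (ih₂ hm₂)
    have hb₁a₂ : b₁ = a₂ := by
      rw [hsum₁, hsum₂] at hpe
      exact (prodEx_to hN (tpair_ne hacyc hab₁) (tpair_ne hacyc hab₂) hpe).1
    subst hb₁a₂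
    rw [hlast₁, hhead₂]
    exact prodEx_of hN (tpair_ne hacyc hc₁) (tpair_ne hacyc hc₂)
      (tpair_ne hacyc (hc₁.trans hc₂))

end SimplexAux
namespace SimplexAux
open LatticePolytope ChainAux Relation

variable {N : ℕ} {E : Fin (N+1) → Fin (N+1) → Prop}

def Wset (E : Fin (N+1) → Fin (N+1) → Prop) : Set (Fin N → ℤ) :=
  {w | ∃ a b, E a b ∧ w = eps b - eps a}

lemma W_sub_tpair {x : Fin N → ℤ} (h : x ∈ Wset E) : TPair E x := by
  obtain ⟨a, b, hab, rfl⟩ := h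
  exact ⟨a, b, TransGen.single hab, rfl⟩

lemma path_list (hN : 0 < N) (hacyc : ∀ a, ¬ TransGen E a a) {a b : Fin (N+1)}
    (h : TransGen E a b) :
    ∃ L : List (Fin N → ℤ), (∀ x ∈ L, x ∈ Wset E) ∧ L ≠ [] ∧
      Consec (unitSimplex N) L ∧ L.sum = eps b - eps a ∧
      ∃ (hne : L ≠ []) (c : Fin (N+1)), E a c ∧ L.head hne = eps c - eps a := by
  induction h using TransGen.head_induction_on with
  | single h1 =>
    rename_i a'
    refine ⟨[eps b - eps a'], ?_, by simp, ?_, by simp, by simp, b, h1, rfl⟩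
    · intro x hx
      simp at hx
      exact ⟨a', b, h1, hx⟩
    · intro i hi
      simp at hi
  | head h1 h2 ih =>
    rename_i a' c'
    -- h1 : E a' c', h2 : TransGen E c' b, ih : motive for c'
    obtain ⟨L, hmL, hneL, hcL, hsumL, hne', d, hcd, hheadL⟩ := ih
    refine ⟨(eps c' - eps a') :: L, ?_, by simp, ?_, ?_, by simp, c', h1, rfl⟩
    · intro x hx
      rcases List.mem_cons.mp hx with rfl | hx
      · exact ⟨a', c', h1, rfl⟩
      · exact hmL x hx
    · intro i hi
      match i with
      | 0 =>
        have h1pos : 1 < ((eps c' - eps a') :: L).length := hi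
        rw [show ((eps c' - eps a') :: L)[0] = eps c' - eps a' from rfl,
          cons_getElem_one hne']
        rw [hheadL]
        exact prodEx_of hN (tpair_ne hacyc (TransGen.single h1))
          (tpair_ne hacyc (TransGen.single hcd))
          (tpair_ne hacyc ((TransGen.single h1).trans (TransGen.single hcd)))
      | Nat.succ i =>
        have hi' : i + 1 < L.length := by
          simpa using hi
        have e1 : ((eps c' - eps a') :: L)[i+1]'(by exact Nat.lt_succ_of_lt hi')
            = L[i]'(Nat.lt_of_succ_lt hi') := List.getElem_cons_succ ..
        have e2 : ((eps c' - eps a') :: L)[i+2]'(by exact Nat.succ_lt_succ hi')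
            = L[i+1]'hi' := List.getElem_cons_succ ..
        rw [e1, e2]
        exact hcL i hi'
    · rw [List.sum_cons, hsumL]
      abel

lemma W_bra (hN : 0 < N) (hacyc : ∀ a, ¬ TransGen E a a) :
    (unitSimplex N).bra (Wset E) = {w | TPair E w} := by
  ext w
  constructor
  · rintro ⟨L, hm, hst, rfl⟩
    rw [strongProd_iff] at hst
    obtain ⟨hne, -, hc, -⟩ := hst
    obtain ⟨a, b, hab, hsum, -⟩ := chainT hN hacyc L hne
      (fun x hx => W_sub_tpair (hm x hx)) hc
    exact ⟨a, b, hab, hsum⟩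
  · rintro ⟨a, b, hab, rfl⟩
    obtain ⟨L, hmL, hneL, hcL, hsumL, -⟩ := path_list hN hacyc hab
    exact ⟨L, hmL, strong_of_chainT hN hacyc hneL
      (fun x hx => W_sub_tpair (hmL x hx)) hcL, hsumL⟩

noncomputable def tpA {w : Fin N → ℤ} (hw : TPair E w) : Fin (N+1) := hw.choose
noncomputable def tpB {w : Fin N → ℤ} (hw : TPair E w) : Fin (N+1) :=
  hw.choose_spec.choose

lemma tp_spec {w : Fin N → ℤ} (hw : TPair E w) :
    TransGen E (tpA hw) (tpB hw) ∧ w = eps (tpB hw) - eps (tpA hw) :=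
  hw.choose_spec.choose_spec

lemma tp_unique (hacyc : ∀ a, ¬ TransGen E a a) {w : Fin N → ℤ} (hw : TPair E w)
    {a b : Fin (N+1)} (h : TransGen E a b) (he : w = eps b - eps a) :
    tpA hw = a ∧ tpB hw = b := by
  have hs := tp_spec hw
  have := pair_inj (tpair_ne hacyc h) (tpair_ne hacyc hs.1)
    (by rw [← he, ← hs.2])
  exact ⟨this.1.symm, this.2.symm⟩

noncomputable def braTP (hN : 0 < N) (hacyc : ∀ a, ¬ TransGen E a a)
    (w : {w // w ∈ (unitSimplex N).bra (Wset E)}) : TPair E w.1 :=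
  (Set.ext_iff.mp (W_bra hN hacyc) w.1).mp w.2

noncomputable def fW (hN : 0 < N) (hacyc : ∀ a, ¬ TransGen E a a)
    (w : {w // w ∈ (unitSimplex N).bra (Wset E)}) :
    {p : Fin (N+1) × Fin (N+1) // TransGen E p.1 p.2} :=
  ⟨(tpA (braTP hN hacyc w), tpB (braTP hN hacyc w)), (tp_spec (braTP hN hacyc w)).1⟩

lemma fW_spec (hN : 0 < N) (hacyc : ∀ a, ¬ TransGen E a a)
    (w : {w // w ∈ (unitSimplex N).bra (Wset E)}) :
    w.1 = eps (fW hN hacyc w).1.2 - eps (fW hN hacyc w).1.1 :=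
  (tp_spec (braTP hN hacyc w)).2

lemma fW_trans (hN : 0 < N) (hacyc : ∀ a, ¬ TransGen E a a)
    (w : {w // w ∈ (unitSimplex N).bra (Wset E)}) :
    TransGen E (fW hN hacyc w).1.1 (fW hN hacyc w).1.2 :=
  (tp_spec (braTP hN hacyc w)).1

lemma fW_bij (hN : 0 < N) (hacyc : ∀ a, ¬ TransGen E a a) :
    Function.Bijective (fW hN hacyc) := by
  constructor
  · intro u v h
    apply Subtype.ext
    rw [fW_spec hN hacyc u, fW_spec hN hacyc v, h]
  · intro p
    have hw : eps p.1.2 - eps p.1.1 ∈ (unitSimplex N).bra (Wset E) := by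
      rw [W_bra hN hacyc]
      exact ⟨p.1.1, p.1.2, p.2, rfl⟩
    refine ⟨⟨_, hw⟩, ?_⟩
    apply Subtype.ext
    have := tp_unique hacyc (braTP hN hacyc ⟨_, hw⟩) p.2 rfl
    exact Prod.ext this.1 this.2

lemma fW_iff (hN : 0 < N) (hacyc : ∀ a, ¬ TransGen E a a)
    (u v : {w // w ∈ (unitSimplex N).bra (Wset E)}) :
    (unitSimplex N).ProdEx u.1 v.1 ↔
      (fW hN hacyc u).1.2 = (fW hN hacyc v).1.1 := by
  have hu := fW_spec hN hacyc u
  have hv := fW_spec hN hacyc v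
  have htu := fW_trans hN hacyc u
  have htv := fW_trans hN hacyc v
  constructor
  · intro hpe
    rw [hu, hv] at hpe
    exact (prodEx_to hN (tpair_ne hacyc htu) (tpair_ne hacyc htv) hpe).1
  · intro heq
    rw [hu, hv, ← heq]
    exact prodEx_of hN (tpair_ne hacyc htu)
      (heq ▸ tpair_ne hacyc htv)
      (tpair_ne hacyc (htu.trans (heq ▸ htv)))

lemma fW_mul (hN : 0 < N) (hacyc : ∀ a, ¬ TransGen E a a)
    (u v : {w // w ∈ (unitSimplex N).bra (Wset E)})
    (h : u.1 + v.1 ∈ (unitSimplex N).bra (Wset E))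
    (hpe : (unitSimplex N).ProdEx u.1 v.1) :
    (fW hN hacyc ⟨u.1 + v.1, h⟩).1 = ((fW hN hacyc u).1.1, (fW hN hacyc v).1.2) := by
  have hu := fW_spec hN hacyc u
  have hv := fW_spec hN hacyc v
  have htu := fW_trans hN hacyc u
  have htv := fW_trans hN hacyc v
  have heq := (fW_iff hN hacyc u v).mp hpe
  have hsum : u.1 + v.1 = eps (fW hN hacyc v).1.2 - eps (fW hN hacyc u).1.1 := by
    rw [hu, hv, heq]
    abel
  have htrans : TransGen E (fW hN hacyc u).1.1 (fW hN hacyc v).1.2 :=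
    htu.trans (heq ▸ htv)
  have := tp_unique hacyc (braTP hN hacyc ⟨u.1 + v.1, h⟩) htrans hsum
  exact Prod.ext this.1 this.2

end SimplexAux
namespace ChainAux
open LatticePolytope Relation GraphAux

lemma subset_rigid {n k : ℕ} {P : LatticePolytope n} {V : Set (Fin n → ℤ)}
    {E : Fin k → Fin k → Prop} (hgood : GoodGraph k E)
    (g : {w // w ∈ P.bra V} → {p : Fin k × Fin k // TransGen E p.1 p.2})
    (hgbij : Function.Bijective g)
    (hiff : ∀ u v : {w // w ∈ P.bra V}, P.ProdEx u.1 v.1 ↔ (g u).1.2 = (g v).1.1)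
    (hmul : ∀ u v : {w // w ∈ P.bra V}, ∀ h : u.1 + v.1 ∈ P.bra V,
      P.ProdEx u.1 v.1 → (g ⟨u.1 + v.1, h⟩).1 = ((g u).1.1, (g v).1.2))
    (hbk : P.bra V = P.ket V)
    (hno : ∀ w, w ∈ P.bra V → -w ∉ P.bra V)
    (U : Set (Fin n → ℤ)) (hU : U ⊆ P.bra V) : P.IsRigid U := by
  have hacyc : ∀ a, ¬ TransGen E a a := good_acyclic hgood
  have hBsub : P.bra U ⊆ P.bra V := bra_sub g hiff hmul hbk hU
  refine ⟨fun x hx => bra_subset_col (hU hx), ?_, braU_eq_ketU g hiff hmul hbk hU, ?_⟩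
  · intro w hw hw'
    exact hno w (hBsub hw) (hBsub hw')
  -- construction of the supporting graph
  set S : Fin k → Fin k → Prop :=
    fun a b => ∃ w : {w // w ∈ P.bra V}, w.1 ∈ P.bra U ∧ (g w).1 = (a, b) with hS
  have hSsub : ∀ {a b}, S a b → TransGen E a b := by
    rintro a b ⟨w, hwU, hp⟩
    have := (g w).2
    rwa [hp] at this
  have hStrans : ∀ {a b c}, S a b → S b c → S a c := by
    rintro a b c ⟨w₁, hw₁U, hp₁⟩ ⟨w₂, hw₂U, hp₂⟩
    have hpe : P.ProdEx w₁.1 w₂.1 := by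
      refine (hiff w₁ w₂).mpr ?_
      rw [hp₁, hp₂]
    have hmemU : w₁.1 + w₂.1 ∈ P.bra U := braU_mul g hiff hmul hbk hU hw₁U hw₂U hpe
    have hmemV : w₁.1 + w₂.1 ∈ P.bra V := hBsub hmemU
    refine ⟨⟨w₁.1 + w₂.1, hmemV⟩, hmemU, ?_⟩
    have := hmul w₁ w₂ hmemV hpe
    rw [this, hp₁, hp₂]
  set E' : Fin k → Fin k → Prop :=
    fun a b => S a b ∧ ¬ ∃ c, S a c ∧ S c b with hE'
  have hdec : ∀ {a b}, S a b → TransGen E' a b := fun {a b} h =>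
    decompose hacyc S (fun h => hSsub h) a b h
  have hE'S : ∀ {a b}, TransGen E' a b → S a b := by
    intro a b h
    induction h with
    | single h1 => exact h1.1
    | tail h1 h2 ih => exact hStrans ih h2.1
  set Vs : Set (Fin k) := {a | (∃ b, S a b) ∨ (∃ b, S b a)} with hVs
  have hE'mem : ∀ {a b}, E' a b → a ∈ Vs ∧ b ∈ Vs := by
    intro a b h
    exact ⟨Or.inl ⟨b, h.1⟩, Or.inr ⟨a, h.1⟩⟩
  haveI : Fintype ↥Vs := Fintype.ofFinite _
  set k' : ℕ := Fintype.card ↥Vs with hk'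
  set e : ↥Vs ≃ Fin k' := Fintype.equivFin ↥Vs with he
  set Esub : ↥Vs → ↥Vs → Prop := fun p q => E' p.1 q.1 with hEsub
  set E'' : Fin k' → Fin k' → Prop := fun i j => E' (e.symm i).1 (e.symm j).1 with hE''
  have t1 : ∀ {p q : ↥Vs}, TransGen Esub p q → TransGen E'' (e p) (e q) := by
    intro p q h
    refine TransGen.lift e ?_ _ _ h
    intro x y hxy
    show E' (e.symm (e x)).1 (e.symm (e y)).1
    rw [Equiv.symm_apply_apply, Equiv.symm_apply_apply]
    exact hxy
  have t2 : ∀ {i j : Fin k'}, TransGen E'' i j → TransGen Esub (e.symm i) (e.symm j) :=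
    fun h => TransGen.lift e.symm (fun _ _ hh => hh) _ _ h
  have hSE'' : ∀ {a b : Fin k}, S a b → ∀ (ha : a ∈ Vs) (hb : b ∈ Vs),
      TransGen E'' (e ⟨a, ha⟩) (e ⟨b, hb⟩) := by
    intro a b hSab ha hb
    exact t1 (transGen_to_subtype (fun h => hE'mem h) (hdec hSab) ha hb)
  have hE''S : ∀ {i j : Fin k'}, TransGen E'' i j → S (e.symm i).1 (e.symm j).1 :=
    fun h => hE'S (transGen_of_subtype (t2 h))
  have hgood'' : GoodGraph k' E'' := by
    constructor
    · intro i
      obtain hvl | hvr := (e.symm i).2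
      · obtain ⟨b, hSb⟩ := hvl
        left
        have hdec' := hdec hSb
        have hedge : ∃ c, E' (e.symm i).1 c := by
          cases hdec' using TransGen.head_induction_on with
          | single h1 => exact ⟨_, h1⟩
          | head h1 h2 _ => exact ⟨_, h1⟩
        obtain ⟨c, hc⟩ := hedge
        have hcVs : c ∈ Vs := (hE'mem hc).2
        refine ⟨e ⟨c, hcVs⟩, ?_⟩
        show E' (e.symm i).1 (e.symm (e ⟨c, hcVs⟩)).1
        rw [Equiv.symm_apply_apply]
        exact hc
      · obtain ⟨b, hSb⟩ := hvr
        right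
        have hdec' := hdec hSb
        have hedge : ∃ c, E' c (e.symm i).1 := by
          cases hdec' with
          | single h1 => exact ⟨_, h1⟩
          | tail h1 h2 => exact ⟨_, h2⟩
        obtain ⟨c, hc⟩ := hedge
        have hcVs : c ∈ Vs := (hE'mem hc).1
        refine ⟨e ⟨c, hcVs⟩, ?_⟩
        show E' (e.symm (e ⟨c, hcVs⟩)).1 (e.symm i).1
        rw [Equiv.symm_apply_apply]
        exact hc
    · intro i hE''ii
      exact hacyc _ (hSsub hE''ii.1)
    · rintro i j hij ⟨m, h1, h2⟩
      exact hij.2 ⟨(e.symm m).1, hE''S h1, hE''S h2⟩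
  refine ⟨k', E'', hgood'', ?_⟩
  -- the bijection
  have hSmem : ∀ w : {w // w ∈ P.bra U},
      S (g ⟨w.1, hBsub w.2⟩).1.1 (g ⟨w.1, hBsub w.2⟩).1.2 := by
    intro w
    exact ⟨⟨w.1, hBsub w.2⟩, w.2, Prod.mk.eta.symm⟩
  refine ⟨fun w => ⟨(e ⟨(g ⟨w.1, hBsub w.2⟩).1.1, Or.inl ⟨_, hSmem w⟩⟩,
      e ⟨(g ⟨w.1, hBsub w.2⟩).1.2, Or.inr ⟨_, hSmem w⟩⟩),
      hSE'' (hSmem w) _ _⟩, ⟨?_, ?_⟩, ?_⟩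
  · -- injective
    intro w₁ w₂ hww
    simp only [Subtype.mk.injEq, Prod.mk.injEq] at hww
    have h1 : (g ⟨w₁.1, hBsub w₁.2⟩).1.1 = (g ⟨w₂.1, hBsub w₂.2⟩).1.1 :=
      congrArg Subtype.val (e.injective hww.1)
    have h2 : (g ⟨w₁.1, hBsub w₁.2⟩).1.2 = (g ⟨w₂.1, hBsub w₂.2⟩).1.2 :=
      congrArg Subtype.val (e.injective hww.2)
    have hg : g ⟨w₁.1, hBsub w₁.2⟩ = g ⟨w₂.1, hBsub w₂.2⟩ :=
      Subtype.ext (Prod.ext h1 h2)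
    have h3 := hgbij.injective hg
    have hval := Subtype.ext_iff.mp h3
    exact Subtype.ext hval
  · -- surjective
    rintro ⟨⟨i, j⟩, hT⟩
    obtain ⟨w, hwU, hp⟩ := hE''S hT
    refine ⟨⟨w.1, hwU⟩, ?_⟩
    apply Subtype.ext
    have hww : (⟨w.1, hBsub hwU⟩ : {w // w ∈ P.bra V}) = w := Subtype.ext rfl
    have hv1 : ((g ⟨w.1, hBsub hwU⟩).1.1 : Fin k) = (e.symm i).1 := by
      rw [hww, hp]
    have hv2 : ((g ⟨w.1, hBsub hwU⟩).1.2 : Fin k) = (e.symm j).1 := by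
      rw [hww, hp]
    apply Prod.ext
    · exact (congrArg e (Subtype.ext hv1)).trans (e.apply_symm_apply i)
    · exact (congrArg e (Subtype.ext hv2)).trans (e.apply_symm_apply j)
  · -- product structure
    intro u v
    constructor
    · have hiff' := hiff ⟨u.1, hBsub u.2⟩ ⟨v.1, hBsub v.2⟩
      rw [hiff']
      constructor
      · intro hh
        simp only
        congr 1
        exact Subtype.ext hh
      · intro hh
        have := e.injective hh
        exact congrArg Subtype.val this
    · intro h hpe
      have hmm' : (g ⟨u.1 + v.1, hBsub h⟩).1
          = ((g ⟨u.1, hBsub u.2⟩).1.1, (g ⟨v.1, hBsub v.2⟩).1.2) :=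
        hmul ⟨u.1, hBsub u.2⟩ ⟨v.1, hBsub v.2⟩ (hBsub h) hpe
      have c1 : (g ⟨u.1 + v.1, hBsub h⟩).1.1 = (g ⟨u.1, hBsub u.2⟩).1.1 := by
        rw [hmm']
      have c2 : (g ⟨u.1 + v.1, hBsub h⟩).1.2 = (g ⟨v.1, hBsub v.2⟩).1.2 := by
        rw [hmm']
      apply Prod.ext
      · exact congrArg e (Subtype.ext c1)
      · exact congrArg e (Subtype.ext c2)

end ChainAux
/-- A rigid system supported by a graph with `N+1` vertices is isomorphic, as a
partial product structure, to a rigid system in the unit `N`-simplex; and every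
subset of `[V]` is rigid. -/
theorem statement11 {n : ℕ} (P : LatticePolytope n) (hfd : P.IsFullDim)
    (hgen : P.AffGen) (V : Set (Fin n → ℤ)) (hV : P.IsRigid V)
    (N : ℕ) (E : Fin (N + 1) → Fin (N + 1) → Prop)
    (hsup : P.Supports V (N + 1) E) :
    (∃ W : Set (Fin N → ℤ), (unitSimplex N).IsRigid W ∧
      ∃ f : {w // w ∈ P.bra V} → {w // w ∈ (unitSimplex N).bra W},
        Function.Bijective f ∧
        ∀ u v : {w // w ∈ P.bra V},
          (P.ProdEx u.1 v.1 ↔ (unitSimplex N).ProdEx (f u).1 (f v).1) ∧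
          ∀ h : u.1 + v.1 ∈ P.bra V, P.ProdEx u.1 v.1 →
            (f ⟨u.1 + v.1, h⟩).1 = (f u).1 + (f v).1) ∧
    (∀ U : Set (Fin n → ℤ), U ⊆ P.bra V → P.IsRigid U) := by
  classical
  obtain ⟨hgood, g, hgbij, hgprop⟩ := hsup
  have hiff : ∀ u v : {w // w ∈ P.bra V},
      P.ProdEx u.1 v.1 ↔ (g u).1.2 = (g v).1.1 := fun u v => (hgprop u v).1
  have hmul : ∀ u v : {w // w ∈ P.bra V}, ∀ h : u.1 + v.1 ∈ P.bra V,
      P.ProdEx u.1 v.1 → (g ⟨u.1 + v.1, h⟩).1 = ((g u).1.1, (g v).1.2) :=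
    fun u v h hp => (hgprop u v).2 h hp
  have hbk : P.bra V = P.ket V := hV.2.2.1
  have hno : ∀ w, w ∈ P.bra V → -w ∉ P.bra V := hV.2.1
  have hacyc : ∀ a, ¬ Relation.TransGen E a a := GraphAux.good_acyclic hgood
  constructor
  · -- part (a)
    rcases Nat.eq_zero_or_pos N with rfl | hN
    · exfalso
      rcases hgood.no_isolated 0 with ⟨b, hb⟩ | ⟨b, hb⟩ <;>
      · have hb0 : b = 0 := Fin.fin_one_eq_zero b
        rw [hb0] at hb
        exact hgood.no_loop 0 hb
    · open SimplexAux ChainAux in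
      refine ⟨Wset E, ⟨?_, ?_, ?_, N+1, E, hgood, fW hN hacyc, fW_bij hN hacyc,
        fun u v => ⟨fW_iff hN hacyc u v, fun h hp => fW_mul hN hacyc u v h hp⟩⟩, ?_⟩
      · -- W ⊆ Col
        rintro w ⟨a, b, hab, rfl⟩
        exact ⟨_, col_vec hN (tpair_ne hacyc (Relation.TransGen.single hab))⟩
      · -- no ±w pairs
        intro w hw hw'
        rw [W_bra hN hacyc] at hw hw'
        obtain ⟨a, b, hab, rfl⟩ := hw
        obtain ⟨a', b', hab', heq⟩ := hw'
        have heq2 : eps a - eps b = eps b' - eps a' := by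
          rw [← heq]; abel
        obtain ⟨h1, h2⟩ := pair_inj (Ne.symm (tpair_ne hacyc hab))
          (tpair_ne hacyc hab') heq2
        -- h1 : b = a', h2 : a = b'
        subst h1; subst h2
        exact hacyc _ (hab.trans hab')
      · -- bra = ket
        ext w
        constructor
        · rintro ⟨L, hm, hst, rfl⟩
          rw [strongProd_iff] at hst
          obtain ⟨hne, -, hc, -⟩ := hst
          exact ⟨L, hm, weak_of_chainT hN hacyc hne
            (fun x hx => W_sub_tpair (hm x hx)) hc, rfl⟩
        · rintro ⟨L, hm, hw, rfl⟩
          have tp : ∀ x ∈ L, TPair E x := fun x hx => W_sub_tpair (hm x hx)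
          exact ⟨L, hm, strong_of_chainT hN hacyc (weak_ne_nil hw) tp
            (weak_consecT hN hacyc hw tp), rfl⟩
      · -- the bijection f
        set fWe : {w // w ∈ (unitSimplex N).bra (Wset E)} ≃
            {p : Fin (N+1) × Fin (N+1) // Relation.TransGen E p.1 p.2} :=
          Equiv.ofBijective _ (fW_bij hN hacyc) with hfWe
        refine ⟨fun u => fWe.symm (g u), fWe.symm.bijective.comp hgbij, ?_⟩
        intro u v
        have hku : fW hN hacyc (fWe.symm (g u)) = g u := fWe.apply_symm_apply (g u)
        have hkv : fW hN hacyc (fWe.symm (g v)) = g v := fWe.apply_symm_apply (g v)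
        constructor
        · have h1 := fW_iff hN hacyc (fWe.symm (g u)) (fWe.symm (g v))
          rw [hku, hkv] at h1
          exact (hiff u v).trans h1.symm
        · intro h hp
          have hks : fW hN hacyc (fWe.symm (g ⟨u.1 + v.1, h⟩)) = g ⟨u.1 + v.1, h⟩ :=
            fWe.apply_symm_apply _
          have e1 := fW_spec hN hacyc (fWe.symm (g ⟨u.1 + v.1, h⟩))
          rw [hks, hmul u v h hp] at e1
          have eu := fW_spec hN hacyc (fWe.symm (g u))
          rw [hku] at eu
          have ev := fW_spec hN hacyc (fWe.symm (g v))
          rw [hkv] at ev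
          have hmatch : (g u).1.2 = (g v).1.1 := (hiff u v).mp hp
          show (fWe.symm (g ⟨u.1 + v.1, h⟩)).1 = (fWe.symm (g u)).1 + (fWe.symm (g v)).1
          rw [e1, eu, ev, hmatch]
          abel
  · -- part (b)
    intro U hU
    exact ChainAux.subset_rigid hgood g hgbij hiff hmul hbk hno U hU
end
end

section
/- Let P be a full-dimensional lattice polytope whose lattice points affinely generate ℤ^n, let V ⊆ Col(P), and let ℬ(V) = {P_v : v ∈ V} be the set of base facets of the elements of V. (a) The following are equivalent: (i) whenever the weak product v_1⋯v_n of elements v_1, …, v_n ∈ V exists (n ∈ ℕ), then for each i ∈ {1, …, n−1} either the product v_i v_{i+1} exists or v_{i+1} = −v_i; (ii) for each v ∈ V one has ⟨F, v⟩ = 0 for all F ∈ ℬ(V) with F ≠ P_v, with at most one exception G, for which ⟨G, v⟩ = 1. (b) If these conditions hold, then for every weakly existing product w = v_1⋯v_n with v_1, …, v_n ∈ V there exists at most one facet G ∈ ℬ(V) with ⟨G, w⟩ > 0, and when such G exists, ⟨G, w⟩ = ⟨G, v_n⟩ = 1. -/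
open Set

noncomputable section

/-- Condition (i): in every weakly existing product of elements of `V`,
consecutive factors either multiply or are opposite to each other. -/
def CondI {n : ℕ} (P : LatticePolytope n) (V : Set (Fin n → ℤ)) : Prop :=
  ∀ L : List (Fin n → ℤ), (∀ x ∈ L, x ∈ V) → P.WeakProd L →
    ∀ i : ℕ, ∀ h : i + 1 < L.length,
      P.ProdEx (L.get ⟨i, Nat.lt_of_succ_lt h⟩) (L.get ⟨i + 1, h⟩) ∨
        L.get ⟨i + 1, h⟩ = -(L.get ⟨i, Nat.lt_of_succ_lt h⟩)

/-- `F ∈ ℬ(V)`: `F` is the base facet of some element of `V`. -/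
def InBF {n : ℕ} (P : LatticePolytope n) (V : Set (Fin n → ℤ)) (F : P.Facet) :
    Prop :=
  ∃ z ∈ V, P.IsBaseFacet z F

/-- Condition (ii): each `v ∈ V` pairs to `0` with all facets in `ℬ(V)` other
than `P_v`, with at most one exception `G`, for which `⟨G,v⟩ = 1`. -/
def CondII {n : ℕ} (P : LatticePolytope n) (V : Set (Fin n → ℤ)) : Prop :=
  ∀ v ∈ V, ∀ Fv : P.Facet, P.IsBaseFacet v Fv →
    (∀ F : P.Facet, InBF P V F → F ≠ Fv → F.form v = 0) ∨
    (∃ G : P.Facet, InBF P V G ∧ G ≠ Fv ∧ G.form v = 1 ∧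
      ∀ F : P.Facet, InBF P V F → F ≠ Fv → F ≠ G → F.form v = 0)


namespace Dev
open LatticePolytope

variable {n : ℕ} {P : LatticePolytope n}

/-- formR evaluated at an integer point. -/
theorem formR_toR (φ : (Fin n → ℤ) →+ ℤ) (z : Fin n → ℤ) :
    formR φ (toR z) = (φ z : ℝ) := by
  have hz : z = ∑ i, Pi.single i (z i) := by
    rw [Finset.univ_sum_single]
  have : φ z = ∑ i, z i * φ (Pi.single i 1) := by
    conv_lhs => rw [hz]
    rw [map_sum]
    refine Finset.sum_congr rfl fun i _ => ?_
    have : Pi.single i (z i) = z i • (Pi.single i 1 : Fin n → ℤ) := by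
      funext j
      by_cases h : j = i
      · subst h; simp
      · simp [Pi.single_apply, h]
    rw [this, map_zsmul, smul_eq_mul]
  rw [this]
  push_cast
  rfl

theorem verts_subset_latticePoints {z : Fin n → ℤ} (hz : z ∈ P.verts) :
    z ∈ P.latticePoints := by
  have : toR z ∈ (↑(P.verts.image toR) : Set (Fin n → ℝ)) := by
    simp only [Finset.coe_image, Set.mem_image, Finset.mem_coe]
    exact ⟨z, hz, rfl⟩
  exact subset_convexHull ℝ _ this

theorem latticePoints_nonempty : P.latticePoints.Nonempty := by
  obtain ⟨z, hz⟩ := P.nonem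
  exact ⟨z, verts_subset_latticePoints hz⟩

theorem form_lat_ge (F : P.Facet) {z : Fin n → ℤ} (hz : z ∈ P.latticePoints) :
    F.b ≤ F.form z := by
  have := F.min_le (toR z) hz
  rw [formR_toR] at this
  exact_mod_cast this

theorem lat_mem_facet_iff (F : P.Facet) {z : Fin n → ℤ} (hz : z ∈ P.latticePoints) :
    toR z ∈ F.set ↔ F.form z = F.b := by
  constructor
  · rintro ⟨-, h⟩
    rw [formR_toR] at h
    exact_mod_cast h
  · intro h
    exact ⟨hz, by rw [formR_toR, h]⟩

theorem lat_not_mem_facet_iff (F : P.Facet) {z : Fin n → ℤ} (hz : z ∈ P.latticePoints) :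
    toR z ∉ F.set ↔ F.b < F.form z := by
  rw [lat_mem_facet_iff F hz]
  constructor
  · intro h
    exact lt_of_le_of_ne (form_lat_ge F hz) (Ne.symm h)
  · intro h heq
    omega

/-- the column-vector step. -/
theorem col_step {v : Fin n → ℤ} {F : P.Facet} (hvF : P.IsBaseFacet v F)
    {z : Fin n → ℤ} (hz : z ∈ P.latticePoints) (hb : F.b < F.form z) :
    z + v ∈ P.latticePoints :=
  hvF.2 z hz ((lat_not_mem_facet_iff F hz).2 hb)

end Dev

namespace Dev
open LatticePolytope

variable {n : ℕ} {P : LatticePolytope n}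

/-- the support form as a linear map on `ℝⁿ`. -/
def lf (φ : (Fin n → ℤ) →+ ℤ) : (Fin n → ℝ) →ₗ[ℝ] ℝ :=
  ∑ i, (φ (Pi.single i 1) : ℝ) • (LinearMap.proj i : (Fin n → ℝ) →ₗ[ℝ] ℝ)

theorem lf_eq (φ : (Fin n → ℤ) →+ ℤ) (x : Fin n → ℝ) : lf φ x = formR φ x := by
  simp only [lf, formR, LinearMap.sum_apply, LinearMap.smul_apply, LinearMap.proj_apply,
    smul_eq_mul]
  exact Finset.sum_congr rfl fun i _ => mul_comm _ _

theorem exists_lattice_on_facet (F : P.Facet) :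
    ∃ z ∈ P.latticePoints, F.form z = F.b := by
  obtain ⟨x, hx, hxb⟩ := F.attained
  have hx' : x ∈ convexHull ℝ (↑(P.verts.image toR) : Set (Fin n → ℝ)) := hx
  rw [Finset.convexHull_eq] at hx'
  obtain ⟨w, hw0, hw1, hcm⟩ := hx'
  rw [Finset.centerMass_eq_of_sum_1 _ id hw1] at hcm
  set s := P.verts.image toR with hs
  have hxs : x = ∑ y ∈ s, w y • y := by rw [← hcm]; rfl
  have hsum : (F.b : ℝ) = ∑ y ∈ s, w y * lf F.form y := by
    have : lf F.form x = F.b := by rw [lf_eq, hxb]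
    rw [← this, hxs, map_sum]
    exact Finset.sum_congr rfl fun y _ => by rw [map_smul, smul_eq_mul]
  have hmem : ∀ y ∈ s, (F.b : ℝ) ≤ lf F.form y := by
    intro y hy
    rw [lf_eq]
    exact F.min_le y (subset_convexHull ℝ _ hy)
  have hex : ∃ y ∈ s, 0 < w y ∧ lf F.form y = F.b := by
    by_contra hcon
    push_neg at hcon
    have hpos : ∃ y₀ ∈ s, 0 < w y₀ := by
      by_contra hc
      push_neg at hc
      have : ∑ y ∈ s, w y ≤ 0 := Finset.sum_nonpos hc
      rw [hw1] at this; linarith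
    obtain ⟨y₀, hy₀s, hy₀pos⟩ := hpos
    have hlt : ∑ y ∈ s, w y * (F.b : ℝ) < ∑ y ∈ s, w y * lf F.form y := by
      apply Finset.sum_lt_sum
      · intro y hy
        rcases eq_or_lt_of_le (hw0 y hy) with h0 | h0
        · rw [← h0]; simp
        · have := lt_of_le_of_ne (hmem y hy) (fun h => hcon y hy h0 h.symm)
          exact le_of_lt (by nlinarith)
      · refine ⟨y₀, hy₀s, ?_⟩
        have := lt_of_le_of_ne (hmem y₀ hy₀s) (fun h => hcon y₀ hy₀s hy₀pos h.symm)
        nlinarith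
    rw [← Finset.sum_mul, hw1, one_mul, ← hsum] at hlt
    linarith
  obtain ⟨y, hys, -, hyb⟩ := hex
  rw [hs] at hys
  simp only [Finset.mem_image] at hys
  obtain ⟨z, hz, rfl⟩ := hys
  refine ⟨z, verts_subset_latticePoints hz, ?_⟩
  rw [lf_eq, formR_toR] at hyb
  exact_mod_cast hyb

theorem lat_coord_bound : ∃ r : ℝ, ∀ z ∈ P.latticePoints, ∀ i, |(z i : ℝ)| ≤ r := by
  have hb : Bornology.IsBounded P.carrier := by
    rw [LatticePolytope.carrier, isBounded_convexHull]
    exact (P.verts.image toR).finite_toSet.isBounded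
  obtain ⟨r, hr⟩ := (Metric.isBounded_iff_subset_closedBall (0 : Fin n → ℝ)).1 hb
  refine ⟨r, fun z hz i => ?_⟩
  have h1 : toR z ∈ Metric.closedBall (0 : Fin n → ℝ) r := hr hz
  rw [Metric.mem_closedBall] at h1
  have h2 : dist (toR z i) ((0 : Fin n → ℝ) i) ≤ dist (toR z) 0 := dist_le_pi_dist _ _ i
  have : (0 : Fin n → ℝ) i = 0 := rfl
  rw [this, Real.dist_eq, sub_zero] at h2
  exact le_trans h2 h1

theorem no_ray {v : Fin n → ℤ} (hv : v ≠ 0) (y : Fin n → ℤ) :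
    ¬ (∀ k : ℕ, y + k • v ∈ P.latticePoints) := by
  intro hk
  obtain ⟨r, hr⟩ := lat_coord_bound (P := P)
  obtain ⟨i, hi⟩ := Function.ne_iff.1 hv
  have hvi : (1 : ℝ) ≤ |(v i : ℝ)| := by
    rw [← Int.cast_abs]
    exact_mod_cast Int.one_le_abs (by simpa using hi)
  obtain ⟨k, hk'⟩ := exists_nat_gt (r + |(y i : ℝ)|)
  have hzk := hr _ (hk k) i
  have hcoord : ((y + k • v) i : ℝ) = (y i : ℝ) + (k : ℝ) * (v i : ℝ) := by
    have : (y + k • v) i = y i + (k : ℤ) * v i := by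
      simp [Pi.smul_apply, mul_comm]
    rw [this]; push_cast; ring
  rw [hcoord] at hzk
  have h1 : (k : ℝ) ≤ |(k : ℝ) * (v i : ℝ)| := by
    rw [abs_mul, Nat.abs_cast]
    nlinarith [Nat.cast_nonneg (α := ℝ) k]
  have h2 := abs_add_le ((y i : ℝ) + (k : ℝ) * (v i : ℝ)) (-(y i : ℝ))
  rw [abs_neg] at h2
  have heq : (y i : ℝ) + (k : ℝ) * (v i : ℝ) + (-(y i : ℝ)) = (k : ℝ) * (v i : ℝ) := by ring
  rw [heq] at h2
  linarith

theorem exists_off_facet (hgen : P.AffGen) (F : P.Facet) :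
    ∃ z ∈ P.latticePoints, F.b < F.form z := by
  by_contra h
  push_neg at h
  obtain ⟨x₀, hx₀⟩ := latticePoints_nonempty (P := P)
  have hsub : {y | ∃ x ∈ P.latticePoints, y = x - x₀} ⊆ (F.form.ker : Set (Fin n → ℤ)) := by
    rintro y ⟨x, hx, rfl⟩
    have h1 : F.form x = F.b := le_antisymm (h x hx) (form_lat_ge F hx)
    have h2 : F.form x₀ = F.b := le_antisymm (h x₀ hx₀) (form_lat_ge F hx₀)
    simp only [SetLike.mem_coe, AddMonoidHom.mem_ker, map_sub, h1, h2, sub_self]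
  have hle : AddSubgroup.closure {y | ∃ x ∈ P.latticePoints, y = x - x₀} ≤ F.form.ker :=
    (AddSubgroup.closure_le _).2 hsub
  rw [hgen x₀ hx₀] at hle
  obtain ⟨z, hz⟩ := F.surj 1
  have : F.form z = 0 := hle (AddSubgroup.mem_top z)
  omega

theorem base_facet_core (hgen : P.AffGen) {v : Fin n → ℤ} {F : P.Facet}
    (hvF : P.IsBaseFacet v F) :
    F.form v = -1 ∧ ∃ z ∈ P.latticePoints, F.form z = F.b + 1 := by
  have hneg : F.form v < 0 := by
    by_contra hge
    push_neg at hge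
    obtain ⟨y, hylat, hyb⟩ := exists_off_facet hgen F
    have key : ∀ k : ℕ, y + k • v ∈ P.latticePoints ∧ F.b < F.form (y + k • v) := by
      intro k
      induction k with
      | zero => simpa using ⟨hylat, hyb⟩
      | succ k ih =>
        have hstep := col_step hvF ih.1 ih.2
        have heq : y + (k + 1) • v = (y + k • v) + v := by
          rw [succ_nsmul, ← add_assoc]
        constructor
        · rw [heq]; exact hstep
        · rw [heq, map_add]
          have := ih.2
          omega
    exact no_ray hvF.1 y (fun k => (key k).1)
  obtain ⟨y0, hy0lat, hy0⟩ := exists_off_facet hgen F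
  have hTne : (F.form y0 - F.b).toNat ∈ {m : ℕ | 0 < m ∧ ∃ z ∈ P.latticePoints, F.form z = F.b + m} := by
    constructor
    · omega
    · exact ⟨y0, hy0lat, by omega⟩
  set T := {m : ℕ | 0 < m ∧ ∃ z ∈ P.latticePoints, F.form z = F.b + m} with hT
  have hmem := Nat.sInf_mem ⟨_, hTne⟩
  set h₀ := sInf T with hh₀
  obtain ⟨h₀pos, z₀, hz₀lat, hz₀⟩ := hmem
  -- form v = -h₀
  have hfv : F.form v = -(h₀ : ℤ) := by
    have hz₁ : z₀ + v ∈ P.latticePoints := col_step hvF hz₀lat (by omega)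
    have hge := form_lat_ge F hz₁
    rw [map_add, hz₀] at hge
    by_contra hne
    have hpos : 0 < F.form z₀ + F.form v - F.b := by rw [hz₀]; omega
    have hmem' : (F.form (z₀ + v) - F.b).toNat ∈ T := by
      refine ⟨by rw [map_add]; omega, z₀ + v, hz₁, ?_⟩
      rw [map_add]; omega
    have := Nat.sInf_le hmem'
    rw [← hh₀] at this
    rw [map_add, hz₀] at hmem' this
    omega
  -- divisibility
  have hdvd : ∀ m : ℕ, ∀ z ∈ P.latticePoints, (F.form z - F.b).toNat = m →
      (h₀ : ℤ) ∣ (F.form z - F.b) := by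
    intro m
    induction m using Nat.strong_induction_on with
    | _ m ih =>
      intro z hz hm
      have hge := form_lat_ge F hz
      by_cases h0 : F.form z = F.b
      · simp [h0]
      · have hgt : F.b < F.form z := lt_of_le_of_ne hge (Ne.symm h0)
        have hz' : z + v ∈ P.latticePoints := col_step hvF hz hgt
        have hge' := form_lat_ge F hz'
        rw [map_add, hfv] at hge'
        have hlt : (F.form (z + v) - F.b).toNat < m := by
          rw [map_add, hfv]; omega
        have hd := ih _ hlt (z + v) hz' rfl
        rw [map_add, hfv] at hd
        have h3 := dvd_add hd (dvd_refl (h₀ : ℤ))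
        have heq : F.form z - F.b = F.form z + -(h₀ : ℤ) - F.b + (h₀ : ℤ) := by ring
        rw [heq]
        exact h3
  -- h₀ = 1
  have h₀1 : h₀ = 1 := by
    obtain ⟨x₀, hx₀⟩ := latticePoints_nonempty (P := P)
    have hsub : {y | ∃ x ∈ P.latticePoints, y = x - x₀} ⊆
        ((AddSubgroup.zmultiples (h₀ : ℤ)).comap F.form : Set (Fin n → ℤ)) := by
      rintro y ⟨x, hx, rfl⟩
      have d1 := hdvd _ x hx rfl
      have d2 := hdvd _ x₀ hx₀ rfl
      simp only [SetLike.mem_coe, AddSubgroup.mem_comap, map_sub, Int.mem_zmultiples_iff]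
      have : F.form x - F.form x₀ = (F.form x - F.b) - (F.form x₀ - F.b) := by ring
      rw [this]
      exact dvd_sub d1 d2
    have hle : AddSubgroup.closure {y | ∃ x ∈ P.latticePoints, y = x - x₀} ≤
        (AddSubgroup.zmultiples (h₀ : ℤ)).comap F.form := (AddSubgroup.closure_le _).2 hsub
    rw [hgen x₀ hx₀] at hle
    obtain ⟨z, hz⟩ := F.surj 1
    have : F.form z ∈ AddSubgroup.zmultiples (h₀ : ℤ) := hle (AddSubgroup.mem_top z)
    rw [Int.mem_zmultiples_iff, hz] at this
    have := Int.le_of_dvd (by norm_num) this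
    omega
  refine ⟨by rw [hfv, h₀1]; rfl, z₀, hz₀lat, by rw [hz₀, h₀1]; push_cast; ring⟩

end Dev

namespace Dev
open LatticePolytope

variable {n : ℕ} {P : LatticePolytope n}

theorem facet_ext {F F' : P.Facet} (h1 : F.form = F'.form) (h2 : F.b = F'.b) : F = F' := by
  obtain ⟨f, s, b, m, a, d⟩ := F
  obtain ⟨f', s', b', m', a', d'⟩ := F'
  dsimp at h1 h2
  subst h1
  subst h2
  rfl

theorem walk (hgen : P.AffGen) {v : Fin n → ℤ} {F : P.Facet} (hvF : P.IsBaseFacet v F)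
    {z : Fin n → ℤ} (hz : z ∈ P.latticePoints) :
    ∀ k : ℕ, (k : ℤ) ≤ F.form z - F.b →
      z + k • v ∈ P.latticePoints ∧ F.form (z + k • v) = F.form z - k := by
  have hfv := (base_facet_core hgen hvF).1
  intro k
  induction k with
  | zero => intro _; simpa using hz
  | succ k ih =>
    intro hk
    have hk' : (k : ℤ) ≤ F.form z - F.b := by push_cast at hk ⊢; omega
    obtain ⟨hmem, hform⟩ := ih hk'
    have hgt : F.b < F.form (z + k • v) := by push_cast at hk; omega
    have hstep := col_step hvF hmem hgt
    have heq : z + (k + 1) • v = (z + k • v) + v := by rw [succ_nsmul, ← add_assoc]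
    refine ⟨by rw [heq]; exact hstep, ?_⟩
    rw [heq, map_add, hform, hfv]
    push_cast
    ring

theorem form_nsmul (φ : (Fin n → ℤ) →+ ℤ) (k : ℕ) (v : Fin n → ℤ) :
    φ (k • v) = (k : ℤ) * φ v := by
  rw [map_nsmul, nsmul_eq_mul]

theorem descent (hgen : P.AffGen) {v : Fin n → ℤ} {Fv : P.Facet}
    (hvF : P.IsBaseFacet v Fv) (G : P.Facet) {z : Fin n → ℤ} (hz : z ∈ P.latticePoints) :
    G.b ≤ G.form z + (Fv.form z - Fv.b) * G.form v := by
  set k := (Fv.form z - Fv.b).toNat with hk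
  have hk' : (k : ℤ) = Fv.form z - Fv.b := Int.toNat_of_nonneg (by linarith [form_lat_ge Fv hz])
  obtain ⟨hmem, -⟩ := walk hgen hvF hz k (by omega)
  have := form_lat_ge G hmem
  rw [map_add, form_nsmul, hk'] at this
  linarith

theorem facet_eq_of_heights (hgen : P.AffGen) {F F' : P.Facet}
    (h : ∀ z ∈ P.latticePoints, F.form z - F.b = F'.form z - F'.b) : F = F' := by
  obtain ⟨x₀, hx₀⟩ := latticePoints_nonempty (P := P)
  have hsub : {y | ∃ x ∈ P.latticePoints, y = x - x₀} ⊆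
      ((F.form - F'.form).ker : Set (Fin n → ℤ)) := by
    rintro y ⟨x, hx, rfl⟩
    have h1 := h x hx
    have h2 := h x₀ hx₀
    simp only [SetLike.mem_coe, AddMonoidHom.mem_ker, AddMonoidHom.sub_apply, map_sub]
    omega
  have hle := (AddSubgroup.closure_le _).2 hsub
  rw [hgen x₀ hx₀] at hle
  have hforms : F.form = F'.form := by
    refine AddMonoidHom.ext fun z => ?_
    have := hle (AddSubgroup.mem_top z)
    simp only [AddMonoidHom.mem_ker, AddMonoidHom.sub_apply] at this
    omega
  refine facet_ext hforms ?_
  have h1 := h x₀ hx₀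
  rw [hforms] at h1
  omega

/-- The master geometric lemma: if `F` is a base facet (of `u`) and `⟨F,v⟩ ≤ -1` for a
column vector `v` with base facet `Fv`, then `F = Fv`. -/
theorem base_facet_master (hgen : P.AffGen) {u v : Fin n → ℤ} {F Fv : P.Facet}
    (huF : P.IsBaseFacet u F) (hvFv : P.IsBaseFacet v Fv) (ha : F.form v ≤ -1) : F = Fv := by
  have hAu := (base_facet_core hgen huF).1
  have hAv := (base_facet_core hgen hvFv).1
  have huv0 : u + v ≠ 0 := by
    intro h
    have hv : v = -u := eq_neg_of_add_eq_zero_right h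
    rw [hv, map_neg, hAu] at ha
    omega
  have hc : Fv.form u ≤ 0 := by
    by_contra hc1
    push_neg at hc1
    have hbase : P.IsBaseFacet (u + v) F := by
      refine ⟨huv0, fun x hx hnx => ?_⟩
      have hxl : x ∈ P.latticePoints := hx
      have hx1 : x + u ∈ P.latticePoints := huF.2 x hx hnx
      have hx2 : (x + u) + v ∈ P.latticePoints := by
        refine col_step hvFv hx1 ?_
        have := form_lat_ge Fv hxl
        rw [map_add]
        omega
      have heq : x + (u + v) = (x + u) + v := by rw [add_assoc]
      show toR (x + (u + v)) ∈ P.carrier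
      rw [heq]
      exact hx2
    have := (base_facet_core hgen hbase).1
    rw [map_add, hAu] at this
    omega
  have hkey : ∀ z ∈ P.latticePoints,
      Fv.form z - Fv.b = -(Fv.form u * (F.form z - F.b)) := by
    intro z hz
    set k := (F.form z - F.b).toNat with hkdef
    have hk' : (k : ℤ) = F.form z - F.b := Int.toNat_of_nonneg (by linarith [form_lat_ge F hz])
    obtain ⟨hel, hef⟩ := walk hgen huF hz k (by omega)
    have hFe : F.form (z + k • u) = F.b := by omega
    have hdesc := descent hgen hvFv F hel
    rw [hFe] at hdesc
    have hhe : 0 ≤ Fv.form (z + k • u) - Fv.b := by linarith [form_lat_ge Fv hel]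
    have hmul : (Fv.form (z + k • u) - Fv.b) * F.form v ≤
        (Fv.form (z + k • u) - Fv.b) * (-1) := mul_le_mul_of_nonneg_left ha hhe
    have hFve0 : Fv.form (z + k • u) - Fv.b = 0 := by linarith
    have hcomp : Fv.form (z + k • u) = Fv.form z + (k : ℤ) * Fv.form u := by
      rw [map_add, form_nsmul]
    rw [hcomp, hk'] at hFve0
    linarith [hFve0]
  rcases hc.lt_or_eq with hlt | heq0
  · -- c ≤ -1
    obtain ⟨x₁, hx₁l, hx₁⟩ := (base_facet_core hgen huF).2
    have h1 := hkey x₁ hx₁l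
    rw [hx₁] at h1
    have h1' : Fv.form x₁ - Fv.b = -(Fv.form u) := by linarith [h1]
    have hdesc := descent hgen hvFv F hx₁l
    rw [hx₁, h1'] at hdesc
    -- F.b ≤ F.b + 1 + (-c) * a
    have hca : (-(Fv.form u)) * F.form v ≤ (-(Fv.form u)) * (-1) :=
      mul_le_mul_of_nonneg_left ha (by omega)
    have hc1 : Fv.form u = -1 := by linarith
    have ha1 : F.form v = -1 := by
      rw [hc1] at hdesc
      omega
    apply facet_eq_of_heights hgen
    intro z hz
    have := hkey z hz
    rw [hc1] at this
    linarith
  · exfalso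
    obtain ⟨z, hzl, hzb⟩ := exists_off_facet hgen Fv
    have := hkey z hzl
    rw [heq0, zero_mul, neg_zero] at this
    omega

theorem base_facet_unique (hgen : P.AffGen) {v : Fin n → ℤ} {F F' : P.Facet}
    (h : P.IsBaseFacet v F) (h' : P.IsBaseFacet v F') : F = F' :=
  base_facet_master hgen h h' (le_of_eq (base_facet_core hgen h).1)

theorem form_nonneg_of_ne (hgen : P.AffGen) {u v : Fin n → ℤ} {F Fv : P.Facet}
    (huF : P.IsBaseFacet u F) (hvFv : P.IsBaseFacet v Fv) (hne : F ≠ Fv) :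
    0 ≤ F.form v := by
  by_contra hcon
  push_neg at hcon
  exact hne (base_facet_master hgen huF hvFv (by omega))

theorem exists_on_off (hgen : P.AffGen) {u v : Fin n → ℤ} {F F' : P.Facet}
    (huF : P.IsBaseFacet u F) (hvF' : P.IsBaseFacet v F') (hne : F ≠ F') :
    ∃ z ∈ P.latticePoints, F'.form z = F'.b ∧ F.b < F.form z := by
  by_contra h
  push_neg at h
  have ht : 0 ≤ F.form v := form_nonneg_of_ne hgen huF hvF' hne
  have hall : ∀ z ∈ P.latticePoints, F.form z = F.b := by
    intro z hz
    set k := (F'.form z - F'.b).toNat with hkdef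
    have hk' : (k : ℤ) = F'.form z - F'.b :=
      Int.toNat_of_nonneg (by linarith [form_lat_ge F' hz])
    obtain ⟨hel, hef⟩ := walk hgen hvF' hz k (by omega)
    have hF'e : F'.form (z + k • v) = F'.b := by omega
    have hle := h _ hel hF'e
    have hcomp : F.form (z + k • v) = F.form z + (k : ℤ) * F.form v := by
      rw [map_add, form_nsmul]
    have hge := form_lat_ge F hz
    nlinarith [hk', form_lat_ge F' hz]
  obtain ⟨z, hzl, hzb⟩ := exists_off_facet hgen F
  have := hall z hzl
  omega

end Dev

namespace Dev
open LatticePolytope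

variable {n : ℕ} {P : LatticePolytope n}

theorem prod_base {u v : Fin n → ℤ} {Fu : P.Facet} (hEx : P.ProdEx u v)
    (hFu : P.IsBaseFacet u Fu) : P.IsBaseFacet (u + v) Fu := by
  obtain ⟨hu, ⟨Fv, hvFv⟩, hsum, hmain⟩ := hEx
  refine ⟨hsum, fun x hx hnx => ?_⟩
  have hx1 : x + u ∈ P.latticePoints := hFu.2 x hx hnx
  have hx2 : toR (x + u) ∉ Fv.set := hmain Fu Fv hFu hvFv x hx hnx
  have hx3 := hvFv.2 (x + u) hx1 hx2
  show toR (x + (u + v)) ∈ P.carrier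
  rw [← add_assoc]
  exact hx3

theorem prodex_form_ge_one (hgen : P.AffGen) {u v : Fin n → ℤ} {Fu Fv : P.Facet}
    (hEx : P.ProdEx u v) (hFu : P.IsBaseFacet u Fu) (hFv : P.IsBaseFacet v Fv) :
    1 ≤ Fv.form u := by
  have hAu := (base_facet_core hgen hFu).1
  have hne : Fu ≠ Fv := by
    intro heq
    subst heq
    obtain ⟨z₁, hz₁l, hz₁⟩ := (base_facet_core hgen hFv).2
    have hnx : toR z₁ ∉ Fu.set := (lat_not_mem_facet_iff Fu hz₁l).2 (by omega)
    have h2 := hEx.2.2.2 Fu Fu hFu hFv z₁ hz₁l hnx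
    have hz₁u : z₁ + u ∈ P.latticePoints := hFu.2 z₁ hz₁l hnx
    apply h2
    rw [lat_mem_facet_iff Fu hz₁u, map_add]
    omega
  obtain ⟨q, hql, hqF', hqF⟩ := exists_on_off hgen hFu hFv hne
  have hnotFu : toR q ∉ Fu.set := (lat_not_mem_facet_iff _ hql).2 hqF
  have h2 := hEx.2.2.2 Fu Fv hFu hFv q hql hnotFu
  have hql' : q + u ∈ P.latticePoints := hFu.2 q hql hnotFu
  have h3 := (lat_not_mem_facet_iff Fv hql').1 h2
  rw [map_add] at h3
  omega

theorem prodex_of (hgen : P.AffGen) {u v : Fin n → ℤ} {Fv : P.Facet}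
    (hu : P.IsColVec u) (hFv : P.IsBaseFacet v Fv) (h1 : 1 ≤ Fv.form u)
    (hsum : u + v ≠ 0) : P.ProdEx u v := by
  refine ⟨hu, ⟨Fv, hFv⟩, hsum, ?_⟩
  intro Fu' Fv' hu' hv' x hx hnx
  have heq : Fv' = Fv := base_facet_unique hgen hv' hFv
  subst heq
  have hxl : x ∈ P.latticePoints := hx
  have hx1 : x + u ∈ P.latticePoints := hu'.2 x hx hnx
  rw [lat_not_mem_facet_iff Fv' hx1, map_add]
  have := form_lat_ge Fv' hxl
  omega

theorem prodex_form_zero (hgen : P.AffGen) {u v : Fin n → ℤ} {Fu : P.Facet}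
    (hEx : P.ProdEx u v) (hFu : P.IsBaseFacet u Fu) : Fu.form v = 0 := by
  have h1 := (base_facet_core hgen (prod_base hEx hFu)).1
  have h2 := (base_facet_core hgen hFu).1
  rw [map_add, h2] at h1
  omega

theorem asym (hgen : P.AffGen) {u v : Fin n → ℤ} {Fu Fv : P.Facet}
    (hFu : P.IsBaseFacet u Fu) (hFv : P.IsBaseFacet v Fv)
    (h1 : 1 ≤ Fv.form u) (h2 : 1 ≤ Fu.form v) : u + v = 0 := by
  by_contra h
  have hEx := prodex_of hgen ⟨Fu, hFu⟩ hFv h1 h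
  have := prodex_form_zero hgen hEx hFu
  omega

theorem weak_ne_nil {L : List (Fin n → ℤ)} (h : P.WeakProd L) : L ≠ [] := by
  induction h with
  | single v hv => simp
  | mul L₁ L₂ h₁ h₂ hEx ih₁ ih₂ =>
    intro hc
    rw [List.append_eq_nil_iff] at hc
    exact ih₁ hc.1

theorem weak_col_mem {L : List (Fin n → ℤ)} (h : P.WeakProd L) :
    ∀ x ∈ L, P.IsColVec x := by
  induction h with
  | single v hv => intro x hx; rw [List.mem_singleton] at hx; subst hx; exact hv
  | mul L₁ L₂ h₁ h₂ hEx ih₁ ih₂ =>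
    intro x hx
    rcases List.mem_append.1 hx with h | h
    · exact ih₁ x h
    · exact ih₂ x h

theorem weak_head_base {L : List (Fin n → ℤ)} (h : P.WeakProd L) :
    ∀ a, L.head? = some a → ∀ F : P.Facet, P.IsBaseFacet a F → P.IsBaseFacet L.sum F := by
  induction h with
  | single v hv =>
    intro a ha F hF
    simp only [List.head?_cons, Option.some.injEq] at ha
    subst ha
    simpa using hF
  | mul L₁ L₂ h₁ h₂ hEx ih₁ ih₂ =>
    intro a ha F hF
    rcases L₁ with - | ⟨x, t⟩
    · exact absurd rfl (weak_ne_nil h₁)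
    · simp only [List.cons_append, List.head?_cons, Option.some.injEq] at ha
      subst ha
      have hbase := ih₁ x rfl F hF
      rw [List.sum_append]
      exact prod_base hEx hbase

theorem weak_sum_col {L : List (Fin n → ℤ)} (h : P.WeakProd L) : P.IsColVec L.sum := by
  rcases L with - | ⟨x, t⟩
  · exact absurd rfl (weak_ne_nil h)
  · obtain ⟨F, hF⟩ := weak_col_mem h x List.mem_cons_self
    exact ⟨F, weak_head_base h x rfl F hF⟩

theorem weak_decomp {L : List (Fin n → ℤ)} (h : P.WeakProd L) :
    ∀ i : ℕ, ∀ hi : i + 1 < L.length,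
    ∃ M N : List (Fin n → ℤ), P.WeakProd M ∧ P.WeakProd N ∧ P.ProdEx M.sum N.sum ∧
      (∀ x ∈ M, x ∈ L) ∧ (∀ x ∈ N, x ∈ L) ∧
      M.getLast? = some (L.get ⟨i, Nat.lt_of_succ_lt hi⟩) ∧
      N.head? = some (L.get ⟨i + 1, hi⟩) := by
  induction h with
  | single v hv => intro i hi; simp at hi
  | mul L₁ L₂ h₁ h₂ hEx ih₁ ih₂ =>
    intro i hi
    have hlen : (L₁ ++ L₂).length = L₁.length + L₂.length := List.length_append
    by_cases hi1 : i + 1 < L₁.length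
    · obtain ⟨M, N, hM, hN, hMN, hMm, hNm, hMl, hNh⟩ := ih₁ i hi1
      refine ⟨M, N, hM, hN, hMN, fun x hx => List.mem_append_left _ (hMm x hx),
        fun x hx => List.mem_append_left _ (hNm x hx), ?_, ?_⟩
      · rw [hMl]
        congr 1
        simp only [List.get_eq_getElem]
        exact (List.getElem_append_left (Nat.lt_of_succ_lt hi1)).symm
      · rw [hNh]
        congr 1
        simp only [List.get_eq_getElem]
        exact (List.getElem_append_left hi1).symm
    · by_cases hi2 : L₁.length ≤ i
      · have hj : (i - L₁.length) + 1 < L₂.length := by omega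
        obtain ⟨M, N, hM, hN, hMN, hMm, hNm, hMl, hNh⟩ := ih₂ (i - L₁.length) hj
        refine ⟨M, N, hM, hN, hMN, fun x hx => List.mem_append_right _ (hMm x hx),
          fun x hx => List.mem_append_right _ (hNm x hx), ?_, ?_⟩
        · rw [hMl]
          congr 1
          simp only [List.get_eq_getElem]
          rw [List.getElem_append_right hi2]
        · rw [hNh]
          congr 1
          simp only [List.get_eq_getElem]
          rw [List.getElem_append_right (by omega : L₁.length ≤ i + 1)]
          congr 1
          omega
      · have hieq : i + 1 = L₁.length := by omega
        refine ⟨L₁, L₂, h₁, h₂, hEx, fun x hx => List.mem_append_left _ hx,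
          fun x hx => List.mem_append_right _ hx, ?_, ?_⟩
        · have hidx : L₁.length - 1 = i := by omega
          rw [List.getLast?_eq_getElem?, hidx,
            List.getElem?_eq_getElem (by omega : i < L₁.length)]
          simp only [List.get_eq_getElem]
          rw [List.getElem_append_left (by omega : i < L₁.length)]
        · rcases L₂ with - | ⟨y, t⟩
          · exact absurd rfl (weak_ne_nil h₂)
          · simp only [List.head?_cons, Option.some.injEq]
            simp only [List.get_eq_getElem]
            rw [List.getElem_append_right (by omega : L₁.length ≤ i + 1)]
            have : i + 1 - L₁.length = 0 := by omega
            simp [this]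

end Dev

namespace Dev
open LatticePolytope

variable {n : ℕ} {P : LatticePolytope n}

theorem wp2 {a b : Fin n → ℤ} (hEx : P.ProdEx a b) : P.WeakProd [a, b] := by
  have h := WeakProd.mul [a] [b] (.single a hEx.1) (.single b hEx.2.1) (by simpa using hEx)
  simpa using h

theorem wp3 {a b c : Fin n → ℤ} (hE1 : P.ProdEx a b) (hE2 : P.ProdEx (a + b) c) :
    P.WeakProd [a, b, c] := by
  have h := WeakProd.mul [a, b] [c] (wp2 hE1) (.single c hE2.2.1)
    (by simpa [add_assoc] using hE2)
  simpa using h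

theorem wp4 {a b c d : Fin n → ℤ} (hE1 : P.ProdEx a b) (hE2 : P.ProdEx (a + b) c)
    (hE3 : P.ProdEx (a + b + c) d) : P.WeakProd [a, b, c, d] := by
  have h := WeakProd.mul [a, b, c] [d] (wp3 hE1 hE2) (.single d hE3.2.1)
    (by simpa [add_assoc] using hE3)
  simpa using h

/-- The invariant / part (b): under condition (ii), each weakly existing product has at
most one positive pairing with `ℬ(V)`, of value `1`, matching the last factor. -/
theorem inv_lemma (hgen : P.AffGen) {V : Set (Fin n → ℤ)} (hVC : V ⊆ P.Col)
    (hII : CondII P V) :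
    ∀ L : List (Fin n → ℤ), P.WeakProd L → (∀ x ∈ L, x ∈ V) →
      (∀ G G' : P.Facet, InBF P V G → InBF P V G' →
        0 < G.form L.sum → 0 < G'.form L.sum → G = G') ∧
      (∀ G : P.Facet, InBF P V G → 0 < G.form L.sum →
        G.form L.sum = 1 ∧ ∀ vn, L.getLast? = some vn → G.form vn = 1) := by
  intro L hW
  induction hW with
  | single v hv =>
    intro hmem
    have hvV : v ∈ V := hmem v (List.mem_singleton_self v)
    obtain ⟨Fv, hFv⟩ := hv
    have hAv : Fv.form v = -1 := (base_facet_core hgen hFv).1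
    have hsum : List.sum [v] = v := by simp
    rcases hII v hvV Fv hFv with hall | ⟨G₀, hG₀B, hG₀ne, hG₀1, hrest⟩
    · have hnopos : ∀ G : P.Facet, InBF P V G → ¬ 0 < G.form (List.sum [v]) := by
        intro G hGB hpos
        rw [hsum] at hpos
        by_cases hGFv : G = Fv
        · subst hGFv; omega
        · rw [hall G hGB hGFv] at hpos; omega
      exact ⟨fun G G' hG hG' h1 _ => absurd h1 (hnopos G hG),
        fun G hG h1 => absurd h1 (hnopos G hG)⟩
    · have hchar : ∀ G : P.Facet, InBF P V G → 0 < G.form (List.sum [v]) → G = G₀ := by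
        intro G hGB hpos
        rw [hsum] at hpos
        by_cases hGFv : G = Fv
        · subst hGFv; omega
        · by_cases hGG₀ : G = G₀
          · exact hGG₀
          · rw [hrest G hGB hGFv hGG₀] at hpos; omega
      refine ⟨fun G G' hG hG' h1 h2 => by rw [hchar G hG h1, hchar G' hG' h2], ?_⟩
      intro G hG h1
      have hG0 := hchar G hG h1
      subst hG0
      refine ⟨by rw [hsum]; exact hG₀1, ?_⟩
      intro vn hvn
      simp only [List.getLast?_singleton, Option.some.injEq] at hvn
      subst hvn
      exact hG₀1
  | mul L₁ L₂ h₁ h₂ hEx ih₁ ih₂ =>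
    intro hmem
    have hmem₁ : ∀ x ∈ L₁, x ∈ V := fun x hx => hmem x (List.mem_append_left _ hx)
    have hmem₂ : ∀ x ∈ L₂, x ∈ V := fun x hx => hmem x (List.mem_append_right _ hx)
    obtain ⟨I1u, I1v⟩ := ih₁ hmem₁
    obtain ⟨I2u, I2v⟩ := ih₂ hmem₂
    have hne₁ := weak_ne_nil h₁
    have hne₂ := weak_ne_nil h₂
    have ha₁V : L₁.head hne₁ ∈ V := hmem₁ _ (List.head_mem hne₁)
    have ha₂V : L₂.head hne₂ ∈ V := hmem₂ _ (List.head_mem hne₂)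
    obtain ⟨H₁, hH₁a⟩ := hVC ha₁V
    obtain ⟨H₂, hH₂a⟩ := hVC ha₂V
    have hH₁w : P.IsBaseFacet L₁.sum H₁ :=
      weak_head_base h₁ _ (List.head?_eq_head hne₁) H₁ hH₁a
    have hH₂w : P.IsBaseFacet L₂.sum H₂ :=
      weak_head_base h₂ _ (List.head?_eq_head hne₂) H₂ hH₂a
    have hH₁B : InBF P V H₁ := ⟨_, ha₁V, hH₁a⟩
    have hH₂B : InBF P V H₂ := ⟨_, ha₂V, hH₂a⟩
    have h21 : 1 ≤ H₂.form L₁.sum := prodex_form_ge_one hgen hEx hH₁w hH₂w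
    have h23 : H₁.form L₂.sum = 0 := prodex_form_zero hgen hEx hH₁w
    have hA1 : H₁.form L₁.sum = -1 := (base_facet_core hgen hH₁w).1
    have hA2 : H₂.form L₂.sum = -1 := (base_facet_core hgen hH₂w).1
    have h2v1 : H₂.form L₁.sum = 1 := (I1v H₂ hH₂B (by omega)).1
    have hzero : ∀ F : P.Facet, InBF P V F → F ≠ H₁ → F ≠ H₂ → F.form L₁.sum = 0 := by
      intro F hFB hF1 hF2
      have hge : 0 ≤ F.form L₁.sum := by
        obtain ⟨z, hzV, hzF⟩ := hFB
        exact form_nonneg_of_ne hgen hzF hH₁w hF1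
      rcases hge.lt_or_eq with hlt | heq
      · exact absurd (I1u F H₂ hFB hH₂B hlt (by omega)) hF2
      · omega
    have hform : ∀ F : P.Facet, F.form (L₁ ++ L₂).sum = F.form L₁.sum + F.form L₂.sum := by
      intro F; rw [List.sum_append, map_add]
    have hkey : ∀ G : P.Facet, InBF P V G → 0 < G.form (L₁ ++ L₂).sum →
        0 < G.form L₂.sum ∧ G.form (L₁ ++ L₂).sum = G.form L₂.sum := by
      intro G hGB hpos
      rw [hform] at hpos
      by_cases hGH₁ : G = H₁
      · subst hGH₁; omega
      · by_cases hGH₂ : G = H₂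
        · subst hGH₂; omega
        · have h0 := hzero G hGB hGH₁ hGH₂
          rw [hform]
          omega
    constructor
    · intro G G' hG hG' p p'
      exact I2u G G' hG hG' (hkey G hG p).1 (hkey G' hG' p').1
    · intro G hG p
      obtain ⟨p2, hval⟩ := hkey G hG p
      obtain ⟨hv1, hv2⟩ := I2v G hG p2
      refine ⟨by rw [hval]; exact hv1, ?_⟩
      intro vn hvn
      rw [List.getLast?_append_of_ne_nil _ hne₂] at hvn
      exact hv2 vn hvn

end Dev

namespace Dev
open LatticePolytope

variable {n : ℕ} {P : LatticePolytope n}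

theorem neg_self_zero {u : Fin n → ℤ} (h : u = -u) : u = 0 := by
  funext i
  have := congrFun h i
  simp only [Pi.neg_apply] at this
  simp only [Pi.zero_apply]
  omega

theorem cond_i_to_ii (hgen : P.AffGen) {V : Set (Fin n → ℤ)} (hVC : V ⊆ P.Col)
    (hI : CondI P V) : CondII P V := by
  intro v hvV Fv hFv
  have hAv : Fv.form v = -1 := (base_facet_core hgen hFv).1
  classical
  -- no pairing `≥ 2`
  have hnobig : ∀ G : P.Facet, InBF P V G → G ≠ Fv → G.form v ≤ 1 := by
    intro G hGB hGne
    by_contra hbig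
    push_neg at hbig
    obtain ⟨u, huV, hGu⟩ := hGB
    have hAu : G.form u = -1 := (base_facet_core hgen hGu).1
    have hFvu : Fv.form u = 0 := by
      have hge : 0 ≤ Fv.form u := form_nonneg_of_ne hgen hFv hGu (Ne.symm hGne)
      by_contra hne0
      have h1 : 1 ≤ Fv.form u := by omega
      have h0 := asym hgen hGu hFv h1 (by omega)
      have hv : v = -u := eq_neg_of_add_eq_zero_right h0
      rw [hv, map_neg, hAu] at hbig
      omega
    have hvu : v + u ≠ 0 := by
      intro h
      have hv : v = -u := eq_neg_of_add_eq_zero_left h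
      rw [hv, map_neg, hAu] at hbig
      omega
    have E1 : P.ProdEx v u := prodex_of hgen (hVC hvV) hGu (by omega) hvu
    have hw : P.IsBaseFacet (v + u) Fv := prod_base E1 hFv
    have E2 : P.ProdEx (v + u) u := by
      refine prodex_of hgen ⟨Fv, hw⟩ hGu (by rw [map_add, hAu]; omega) ?_
      intro hc
      have h0 : Fv.form (v + u + u) = 0 := by rw [hc, map_zero]
      rw [map_add, map_add, hAv, hFvu] at h0
      omega
    have W : P.WeakProd [v, u, u] := wp3 E1 E2
    have hd := hI [v, u, u]
      (by intro x hx; simp only [List.mem_cons, List.not_mem_nil, or_false] at hx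
          rcases hx with rfl | rfl | rfl <;> assumption)
      W 1 (by norm_num)
    simp only [List.get_eq_getElem, List.getElem_cons_succ, List.getElem_cons_zero] at hd
    rcases hd with hP | hneg
    · have := prodex_form_ge_one hgen hP hGu hGu
      omega
    · exact hGu.1 (neg_self_zero hneg)
  -- no two positive pairings
  have hnotwo : ∀ G G' : P.Facet, InBF P V G → InBF P V G' → G ≠ Fv → G' ≠ Fv →
      G ≠ G' → 1 ≤ G.form v → 1 ≤ G'.form v → False := by
    intro G G' hGB hG'B hGne hG'ne hGG' hGv hG'v
    obtain ⟨u, huV, hGu⟩ := hGB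
    obtain ⟨u', hu'V, hG'u'⟩ := hG'B
    have hAu : G.form u = -1 := (base_facet_core hgen hGu).1
    have hAu' : G'.form u' = -1 := (base_facet_core hgen hG'u').1
    have hGu' : 0 ≤ G.form u' := form_nonneg_of_ne hgen hGu hG'u' hGG'
    have hG'u : 0 ≤ G'.form u := form_nonneg_of_ne hgen hG'u' hGu (Ne.symm hGG')
    have hvu : v + u ≠ 0 := by
      intro h
      have hv : v = -u := eq_neg_of_add_eq_zero_left h
      rw [hv, map_neg] at hG'v
      omega
    have hvu' : v + u' ≠ 0 := by
      intro h
      have hv : v = -u' := eq_neg_of_add_eq_zero_left h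
      rw [hv, map_neg] at hGv
      omega
    have hFvu : Fv.form u = 0 := by
      have hge : 0 ≤ Fv.form u := form_nonneg_of_ne hgen hFv hGu (Ne.symm hGne)
      by_contra hne0
      have h0 := asym hgen hGu hFv (by omega) hGv
      rw [add_comm] at h0
      exact hvu h0
    have hFvu' : Fv.form u' = 0 := by
      have hge : 0 ≤ Fv.form u' := form_nonneg_of_ne hgen hFv hG'u' (Ne.symm hG'ne)
      by_contra hne0
      have h0 := asym hgen hG'u' hFv (by omega) hG'v
      rw [add_comm] at h0
      exact hvu' h0
    -- first product [v, u', u]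
    have E1' : P.ProdEx v u' := prodex_of hgen (hVC hvV) hG'u' hG'v hvu'
    have hw' : P.IsBaseFacet (v + u') Fv := prod_base E1' hFv
    have E2' : P.ProdEx (v + u') u := by
      refine prodex_of hgen ⟨Fv, hw'⟩ hGu (by rw [map_add]; omega) ?_
      intro hc
      have h0 : Fv.form (v + u' + u) = 0 := by rw [hc, map_zero]
      rw [map_add, map_add, hAv, hFvu, hFvu'] at h0
      omega
    have W' : P.WeakProd [v, u', u] := wp3 E1' E2'
    have hd := hI [v, u', u]
      (by intro x hx; simp only [List.mem_cons, List.not_mem_nil, or_false] at hx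
          rcases hx with rfl | rfl | rfl <;> assumption)
      W' 1 (by norm_num)
    simp only [List.get_eq_getElem, List.getElem_cons_succ, List.getElem_cons_zero] at hd
    rcases hd with hExu'u | hBu
    · -- branch A : `u'u` exists
      have hG'u0 : G'.form u = 0 := prodex_form_zero hgen hExu'u hG'u'
      have huu' : u' + u ≠ 0 := hExu'u.2.2.1
      have E1 : P.ProdEx v u := prodex_of hgen (hVC hvV) hGu hGv hvu
      have hw : P.IsBaseFacet (v + u) Fv := prod_base E1 hFv
      have E2 : P.ProdEx (v + u) u' := by
        refine prodex_of hgen ⟨Fv, hw⟩ hG'u' (by rw [map_add]; omega) ?_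
        intro hc
        have h0 : Fv.form (v + u + u') = 0 := by rw [hc, map_zero]
        rw [map_add, map_add, hAv, hFvu, hFvu'] at h0
        omega
      have W : P.WeakProd [v, u, u'] := wp3 E1 E2
      have hd2 := hI [v, u, u']
        (by intro x hx; simp only [List.mem_cons, List.not_mem_nil, or_false] at hx
            rcases hx with rfl | rfl | rfl <;> assumption)
        W 1 (by norm_num)
      simp only [List.get_eq_getElem, List.getElem_cons_succ, List.getElem_cons_zero] at hd2
      rcases hd2 with hP | hneg
      · have := prodex_form_ge_one hgen hP hGu hG'u'
        omega
      · apply huu'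
        rw [hneg]
        exact neg_add_cancel u
    · -- branch B : u = -u'
      have hGu'1 : G.form u' = 1 := by
        rw [hBu, map_neg] at hAu
        omega
      have hG'u1 : G'.form u = 1 := by
        rw [hBu, map_neg, hAu']
        rfl
      have E1 : P.ProdEx v u := prodex_of hgen (hVC hvV) hGu hGv hvu
      have hw : P.IsBaseFacet (v + u) Fv := prod_base E1 hFv
      have E2b : P.ProdEx (v + u) u' := by
        refine prodex_of hgen ⟨Fv, hw⟩ hG'u' (by rw [map_add]; omega) ?_
        intro hc
        have h0 : Fv.form (v + u + u') = 0 := by rw [hc, map_zero]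
        rw [map_add, map_add, hAv, hFvu, hFvu'] at h0
        omega
      have hw2 : P.IsBaseFacet (v + u + u') Fv := prod_base E2b hw
      have E3 : P.ProdEx (v + u + u') u' := by
        refine prodex_of hgen ⟨Fv, hw2⟩ hG'u'
          (by rw [map_add, map_add]; omega) ?_
        intro hc
        have h0 : Fv.form (v + u + u' + u') = 0 := by rw [hc, map_zero]
        rw [map_add, map_add, map_add, hAv, hFvu, hFvu'] at h0
        omega
      have W4 : P.WeakProd [v, u, u', u'] := wp4 E1 E2b E3
      have hd3 := hI [v, u, u', u']
        (by intro x hx; simp only [List.mem_cons, List.not_mem_nil, or_false] at hx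
            rcases hx with rfl | rfl | rfl | rfl <;> assumption)
        W4 2 (by norm_num)
      simp only [List.get_eq_getElem, List.getElem_cons_succ, List.getElem_cons_zero] at hd3
      rcases hd3 with hP | hneg
      · have := prodex_form_ge_one hgen hP hG'u' hG'u'
        omega
      · exact hG'u'.1 (neg_self_zero hneg)
  -- assemble
  by_cases hex : ∃ G : P.Facet, InBF P V G ∧ G ≠ Fv ∧ 0 < G.form v
  · obtain ⟨G, hGB, hGne, hGpos⟩ := hex
    right
    refine ⟨G, hGB, hGne, by have := hnobig G hGB hGne; omega, ?_⟩
    intro F hFB hFne hFG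
    have hge : 0 ≤ F.form v := by
      obtain ⟨z, hzV, hzF⟩ := hFB
      exact form_nonneg_of_ne hgen hzF hFv hFne
    rcases hge.lt_or_eq with hlt | heq
    · exact absurd (hnotwo F G hFB hGB hFne hGne hFG (by omega) (by omega)) (fun h => h)
    · omega
  · left
    intro F hFB hFne
    have hge : 0 ≤ F.form v := by
      obtain ⟨z, hzV, hzF⟩ := hFB
      exact form_nonneg_of_ne hgen hzF hFv hFne
    have hnp : ¬ 0 < F.form v := fun h => hex ⟨F, hFB, hFne, h⟩
    omega

theorem cond_ii_to_i (hgen : P.AffGen) {V : Set (Fin n → ℤ)} (hVC : V ⊆ P.Col)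
    (hII : CondII P V) : CondI P V := by
  intro L hLV hW i hi
  obtain ⟨M, N, hM, hN, hMN, hMm, hNm, hMl, hNh⟩ := weak_decomp hW i hi
  set a := L.get ⟨i, Nat.lt_of_succ_lt hi⟩ with ha
  set b := L.get ⟨i + 1, hi⟩ with hb
  have hbN : b ∈ N := by
    rcases N with - | ⟨y, t⟩
    · exact absurd rfl (weak_ne_nil hN)
    · simp only [List.head?_cons, Option.some.injEq] at hNh
      rw [← hNh]
      exact List.mem_cons_self
  have hbV : b ∈ V := hLV b (hNm b hbN)
  obtain ⟨K, hK⟩ := hVC hbV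
  have hNbase : P.IsBaseFacet N.sum K := weak_head_base hN b hNh K hK
  obtain ⟨HM, hHM⟩ := weak_sum_col hM
  have h21 : 1 ≤ K.form M.sum := prodex_form_ge_one hgen hMN hHM hNbase
  have hKB : InBF P V K := ⟨b, hbV, hK⟩
  have hMV : ∀ x ∈ M, x ∈ V := fun x hx => hLV x (hMm x hx)
  have hINV := (inv_lemma hgen hVC hII M hM hMV).2 K hKB (by omega)
  have hKa : K.form a = 1 := hINV.2 a hMl
  by_cases hab : a + b = 0
  · right
    exact eq_neg_of_add_eq_zero_right hab
  · left
    have haV : a ∈ V := hLV a (List.get_mem L ⟨i, Nat.lt_of_succ_lt hi⟩)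
    exact prodex_of hgen (hVC haV) hK (by omega) hab

end Dev


/-- (a) Conditions (i) and (ii) are equivalent. (b) If they hold then every
weakly existing product `w = v_1⋯v_n` of elements of `V` has positive pairing
with at most one facet `G ∈ ℬ(V)`, and then `⟨G,w⟩ = ⟨G,v_n⟩ = 1`. -/
theorem statement12 {n : ℕ} (P : LatticePolytope n) (hfd : P.IsFullDim)
    (hgen : P.AffGen) (V : Set (Fin n → ℤ)) (hVC : V ⊆ P.Col) :
    (CondI P V ↔ CondII P V) ∧
    (CondI P V →
      ∀ L : List (Fin n → ℤ), (∀ x ∈ L, x ∈ V) → P.WeakProd L →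
        (∀ G G' : P.Facet, InBF P V G → InBF P V G' →
          0 < G.form L.sum → 0 < G'.form L.sum → G = G') ∧
        (∀ G : P.Facet, InBF P V G → 0 < G.form L.sum →
          G.form L.sum = 1 ∧ ∀ vn, L.getLast? = some vn → G.form vn = 1)) := by
  constructor
  · exact ⟨fun hI => Dev.cond_i_to_ii hgen hVC hI, fun hII => Dev.cond_ii_to_i hgen hVC hII⟩
  · intro hI L hLV hW
    exact Dev.inv_lemma hgen hVC (Dev.cond_i_to_ii hgen hVC hI) L hW hLV
end
end
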